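/- arXiv:1910.00937 — 10 statements merged into one kernel-verified Lean document; each statement's English description precedes it below -/
import Mathlib

section
/- Let (A, m) be an Artinian local ring and let ε ∈ m be a nonzero element with ε·m = 0 (so the ideal (ε) is isomorphic to the residue field of A, and ε² = 0). Let R be a commutative A-algebra that is flat over A, set R_k := R/mR, and for x ∈ R write x̄ for its image in R_k. Let f, g, y ∈ R and r ∈ ℕ, and assume that ȳ is a nonzerodivisor in R_k/(f̄) and in R_k/(ḡ). Then the following are equivalent: (1) there exist h, b ∈ R and s ∈ ℕ such that, in the localization R[1/y], one has f + ε·g/y^r = (1 + ε·b/y^s)·(f + ε·h); (2) ḡ lies in the ideal (f̄, ȳ^r) of R_k. -/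
open IsLocalRing TensorProduct

private lemma key_mem {A : Type*} [CommRing A] [IsLocalRing A]
    (ε : A) (hε0 : ε ≠ 0) (hεann : ∀ a ∈ maximalIdeal A, ε * a = 0)
    {R : Type*} [CommRing R] [Algebra A R] [Module.Flat A R]
    (x : R) (hx : algebraMap A R ε * x = 0) :
    x ∈ (maximalIdeal A).map (algebraMap A R) := by
  classical
  set m := maximalIdeal A with hm
  let i : m →ₗ[A] A := Submodule.subtype m
  let μ : A →ₗ[A] A := LinearMap.lsmul A A ε
  have hexact : Function.Exact i μ := by
    intro a
    simp only [LinearMap.lsmul_apply, smul_eq_mul, μ, i]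
    constructor
    · intro ha
      refine ⟨⟨a, ?_⟩, rfl⟩
      by_contra hmem
      have hu : IsUnit a := not_not.mp (by simpa [hm, IsLocalRing.mem_maximalIdeal] using hmem)
      obtain ⟨u, rfl⟩ := hu
      apply hε0
      have := congrArg (fun z => ((u⁻¹ : Aˣ) : A) * z) ha
      simpa [← mul_assoc, mul_comm] using this
    · rintro ⟨⟨a, ham⟩, rfl⟩
      simpa using hεann a ham
  have hex2 := Module.Flat.lTensor_exact R hexact
  have h1 : μ.lTensor R (x ⊗ₜ[A] 1) = 0 := by
    have e1 : μ.lTensor R (x ⊗ₜ[A] 1) = x ⊗ₜ[A] ε := by simp [μ]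
    rw [e1]
    apply (TensorProduct.rid A R).injective
    simp [TensorProduct.rid_tmul, Algebra.smul_def, hx]
  obtain ⟨w, hw⟩ := (hex2 _).mp h1
  have hx2 : x = TensorProduct.rid A R (i.lTensor R w) := by rw [hw]; simp
  rw [hx2]
  clear hx2 hw h1
  induction w using TensorProduct.induction_on with
  | zero => simp
  | tmul rr c =>
      simp only [LinearMap.lTensor_tmul, Submodule.coe_subtype, TensorProduct.rid_tmul,
        Algebra.smul_def, i]
      exact Ideal.mul_mem_right _ _ (Ideal.mem_map_of_mem _ c.2)
  | add u v hu hv =>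
      rw [map_add, map_add]
      exact Ideal.add_mem _ hu hv

private lemma eps_ann {A : Type*} [CommRing A] [IsLocalRing A]
    (ε : A) (hεann : ∀ a ∈ maximalIdeal A, ε * a = 0)
    {R : Type*} [CommRing R] [Algebra A R]
    (x : R) (hx : x ∈ (maximalIdeal A).map (algebraMap A R)) :
    algebraMap A R ε * x = 0 := by
  refine Submodule.span_induction ?_ ?_ ?_ ?_ hx
  · rintro _ ⟨a, ham, rfl⟩
    rw [← map_mul, hεann a ham, map_zero]
  · simp
  · intro y z _ _ hy hz
    rw [mul_add, hy, hz, add_zero]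
  · intro r y _ hy
    rw [smul_eq_mul, mul_left_comm, hy, mul_zero]

private lemma loc_iff (R : Type*) [CommRing R] (f g y b h ε' : R) (r s : ℕ) :
    (algebraMap R (Localization.Away y) f
            + algebraMap R (Localization.Away y) (ε' * g)
              * Localization.mk 1 (⟨y ^ r, r, rfl⟩ : Submonoid.powers y)
          = (1 + algebraMap R (Localization.Away y) (ε' * b)
                * Localization.mk 1 (⟨y ^ s, s, rfl⟩ : Submonoid.powers y))
            * algebraMap R (Localization.Away y) (f + ε' * h))
     ↔ ∃ t : ℕ, y ^ t * ((ε' * g + y ^ r * f) * y ^ s)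
         = y ^ t * ((y ^ s + ε' * b) * (f + ε' * h) * y ^ r) := by
  rw [← Localization.mk_one_eq_algebraMap, ← Localization.mk_one_eq_algebraMap,
    ← Localization.mk_one_eq_algebraMap, ← Localization.mk_one_eq_algebraMap,
    show (1 : Localization.Away y) = Localization.mk 1 1 by
      rw [Localization.mk_one_eq_algebraMap, map_one]]
  simp only [Localization.mk_mul, Localization.add_mk]
  rw [Localization.mk_eq_mk_iff, Localization.r_iff_exists]
  constructor
  · rintro ⟨⟨_, t, rfl⟩, hc⟩
    refine ⟨t, ?_⟩
    simp only [Submonoid.coe_mul, OneMemClass.coe_one] at hc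
    ring_nf at hc ⊢
    linear_combination hc
  · rintro ⟨t, hc⟩
    refine ⟨⟨y ^ t, t, rfl⟩, ?_⟩
    simp only [Submonoid.coe_mul, OneMemClass.coe_one]
    ring_nf at hc ⊢
    linear_combination hc

/-- Over an Artinian local ring `A` with a socle element `ε` (so `ε ≠ 0`, `ε·m = 0`), for a
flat `A`-algebra `R` and `f, g, y ∈ R`, `r ∈ ℕ` with `ȳ` a nonzerodivisor mod `f̄` and mod `ḡ`
in `R_k = R/mR`: the element `f + ε·g/yʳ` of `R[1/y]` is of the form
`(unit of the form 1 + ε·b/yˢ)·(f + ε·h)` iff `ḡ ∈ (f̄, ȳʳ)`. -/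
theorem stmt_2 {A : Type*} [CommRing A] [IsArtinianRing A] [IsLocalRing A]
    (ε : A) (hε0 : ε ≠ 0) (hεm : ε ∈ IsLocalRing.maximalIdeal A)
    (hεann : ∀ a ∈ IsLocalRing.maximalIdeal A, ε * a = 0)
    {R : Type*} [CommRing R] [Algebra A R] [Module.Flat A R]
    (f g y : R) (r : ℕ)
    (hyf : Ideal.Quotient.mk
        (Ideal.span {Ideal.Quotient.mk ((IsLocalRing.maximalIdeal A).map (algebraMap A R)) f})
        (Ideal.Quotient.mk ((IsLocalRing.maximalIdeal A).map (algebraMap A R)) y)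
        ∈ nonZeroDivisors
          ((R ⧸ (IsLocalRing.maximalIdeal A).map (algebraMap A R)) ⧸
            Ideal.span
              {Ideal.Quotient.mk ((IsLocalRing.maximalIdeal A).map (algebraMap A R)) f}))
    (hyg : Ideal.Quotient.mk
        (Ideal.span {Ideal.Quotient.mk ((IsLocalRing.maximalIdeal A).map (algebraMap A R)) g})
        (Ideal.Quotient.mk ((IsLocalRing.maximalIdeal A).map (algebraMap A R)) y)
        ∈ nonZeroDivisors
          ((R ⧸ (IsLocalRing.maximalIdeal A).map (algebraMap A R)) ⧸
            Ideal.span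
              {Ideal.Quotient.mk ((IsLocalRing.maximalIdeal A).map (algebraMap A R)) g})) :
    (∃ (h b : R) (s : ℕ),
        algebraMap R (Localization.Away y) f
            + algebraMap R (Localization.Away y) (algebraMap A R ε * g)
              * Localization.mk 1 (⟨y ^ r, r, rfl⟩ : Submonoid.powers y)
          = (1 + algebraMap R (Localization.Away y) (algebraMap A R ε * b)
                * Localization.mk 1 (⟨y ^ s, s, rfl⟩ : Submonoid.powers y))
            * algebraMap R (Localization.Away y) (f + algebraMap A R ε * h))
      ↔ Ideal.Quotient.mk ((IsLocalRing.maximalIdeal A).map (algebraMap A R)) g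
          ∈ Ideal.span
            {Ideal.Quotient.mk ((IsLocalRing.maximalIdeal A).map (algebraMap A R)) f,
              Ideal.Quotient.mk ((IsLocalRing.maximalIdeal A).map (algebraMap A R)) y ^ r} := by
  classical
  set ε' := algebraMap A R ε with hε'
  set mR := (IsLocalRing.maximalIdeal A).map (algebraMap A R) with hmR
  set π := Ideal.Quotient.mk mR with hπ
  have hε2 : ε' * ε' = 0 := by
    rw [hε', ← map_mul, hεann ε hεm, map_zero]
  simp only [loc_iff]
  constructor
  · rintro ⟨h, b, s, t, hc⟩
    -- ε' * z = 0 with z := y^(t+s)*g - y^(t+s+r)*h - y^(t+r)*(b*f)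
    have hz : ε' * (y ^ (t + s) * g - y ^ (t + s + r) * h - y ^ (t + r) * (b * f)) = 0 := by
      have e1 : y ^ (t + s) = y ^ t * y ^ s := by ring
      have e2 : y ^ (t + s + r) = y ^ t * y ^ s * y ^ r := by ring
      have e3 : y ^ (t + r) = y ^ t * y ^ r := by ring
      rw [e1, e2, e3]
      linear_combination hc + (y ^ t * y ^ r * b * h) * hε2
    have hmem := key_mem ε hε0 hεann _ hz
    rw [← hmR, ← Ideal.Quotient.eq_zero_iff_mem, ← hπ] at hmem
    have hrel : π y ^ (t + s) * π g - π y ^ (t + s + r) * π h - π y ^ (t + r) * (π b * π f) = 0 := by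
      have := hmem
      push_cast at this ⊢
      rw [hπ] at this ⊢
      simpa [map_sub, map_mul, map_pow] using this
    -- pass to quotient by (π f)
    have hspan : π g - π y ^ r * π h ∈ Ideal.span {π f} := by
      set q := Ideal.Quotient.mk (Ideal.span {π f}) with hq0
      have hqf : q (π f) = 0 := Ideal.Quotient.eq_zero_iff_mem.mpr (Ideal.subset_span rfl)
      have hq := congrArg q hrel
      simp only [map_sub, map_mul, map_pow, map_zero] at hq
      have e : q (π y) ^ (t + s + r) = q (π y) ^ (t + s) * q (π y) ^ r := pow_add _ _ _
      have h0 : q (π g - π y ^ r * π h) * q (π y) ^ (t + s) = 0 := by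
        simp only [map_sub, map_mul, map_pow]
        linear_combination hq + q (π h) * e + q (π y) ^ (t + r) * q (π b) * hqf
      have hy2 : (q (π y)) ^ (t + s) ∈
          nonZeroDivisors ((R ⧸ mR) ⧸ Ideal.span {π f}) := pow_mem hyf (t + s)
      exact Ideal.Quotient.eq_zero_iff_mem.mp (hy2.2 _ h0)
    rw [Ideal.mem_span_singleton'] at hspan
    obtain ⟨c, hcf⟩ := hspan
    rw [Ideal.mem_span_pair]
    exact ⟨c, π h, by linear_combination hcf⟩
  · intro hg
    rw [Ideal.mem_span_pair] at hg
    obtain ⟨c', d', hcd⟩ := hg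
    obtain ⟨c, rfl⟩ := Ideal.Quotient.mk_surjective c'
    obtain ⟨d, rfl⟩ := Ideal.Quotient.mk_surjective d'
    have hz0 : π (c * f + d * y ^ r - g) = 0 := by
      rw [hπ]
      push_cast
      rw [map_sub, map_add, map_mul, map_mul, map_pow]
      rw [← hπ]
      rw [sub_eq_zero]
      exact hcd
    rw [hπ, Ideal.Quotient.eq_zero_iff_mem] at hz0
    have hza : ε' * (c * f + d * y ^ r - g) = 0 := eps_ann ε hεann _ hz0
    refine ⟨d, c, r, 0, ?_⟩
    linear_combination (-(y ^ r)) * hza - (c * d * y ^ r) * hε2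
end

section
/- Let k be a field, n ≥ 3, and let f ∈ k[x_1, ..., x_n] be a nonzero polynomial such that x_i does not divide f for every i = 1, ..., n. Set R := k[x_1, ..., x_n]/(f) and let s ∈ R be the image of x_1·x_2⋯x_n. If an element u of the localization R_s = R[1/s] lies, for every i = 1, ..., n, in the image of the canonical map R[1/x_i] → R[1/s], then u lies in the image of the canonical map R → R[1/s]. -/
open MvPolynomial

namespace Stmt3Aux

variable {k : Type*} [Field k] {n : ℕ}

noncomputable def kill (j : Fin n) : MvPolynomial (Fin n) k →ₐ[k] MvPolynomial (Fin n) k :=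
  aeval (fun i => if i = j then 0 else X i)

lemma kill_X (j i : Fin n) : kill (k := k) j (X i) = if i = j then 0 else X i := by
  simp [kill]

lemma X_dvd_sub_kill (j : Fin n) (p : MvPolynomial (Fin n) k) : X j ∣ p - kill j p := by
  induction p using MvPolynomial.induction_on with
  | C a => simp [kill, algebraMap_eq]
  | add p q hp hq =>
      have h := dvd_add hp hq
      have : p + q - kill j (p + q) = p - kill j p + (q - kill j q) := by
        rw [map_add]; ring
      rwa [this]
  | mul_X p i hp =>
      rw [map_mul, kill_X]
      by_cases hij : i = j
      · rw [if_pos hij, mul_zero, sub_zero, hij]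
        exact Dvd.dvd.mul_left dvd_rfl p
      · rw [if_neg hij]
        have : p * X i - kill j p * X i = (p - kill j p) * X i := by ring
        rw [this]
        exact hp.mul_right _

lemma X_dvd_iff_kill (j : Fin n) (p : MvPolynomial (Fin n) k) :
    X j ∣ p ↔ kill j p = 0 := by
  constructor
  · rintro ⟨c, rfl⟩
    rw [map_mul, kill_X, if_pos rfl, zero_mul]
  · intro h
    have := X_dvd_sub_kill j p
    rwa [h, sub_zero] at this

lemma prime_X' (j : Fin n) : Prime (X j : MvPolynomial (Fin n) k) := by
  refine ⟨X_ne_zero _, ?_, ?_⟩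
  · intro h
    have h1 : (X j : MvPolynomial (Fin n) k) ∣ 1 := h.dvd
    rw [X_dvd_iff_kill, map_one] at h1
    exact one_ne_zero h1
  · intro a b h
    rw [X_dvd_iff_kill, map_mul] at h
    rcases mul_eq_zero.mp h with h | h
    · exact Or.inl ((X_dvd_iff_kill j a).mpr h)
    · exact Or.inr ((X_dvd_iff_kill j b).mpr h)

lemma strip {f q c : MvPolynomial (Fin n) k} (hq : Prime q) (hqf : ¬ q ∣ f)
    (h : f ∣ q * c) : f ∣ c := by
  obtain ⟨g, hg⟩ := h
  have hq2 : q ∣ f * g := ⟨c, by linear_combination -hg⟩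
  rcases hq.2.2 f g hq2 with h' | h'
  · exact absurd h' hqf
  · obtain ⟨g', rfl⟩ := h'
    refine ⟨g', mul_left_cancel₀ hq.1 ?_⟩
    linear_combination hg

lemma strip_Xpow {f : MvPolynomial (Fin n) k} (hfx : ∀ i : Fin n, ¬ X i ∣ f)
    (i : Fin n) (m : ℕ) {c : MvPolynomial (Fin n) k} (h : f ∣ X i ^ m * c) : f ∣ c := by
  induction m with
  | zero => simpa using h
  | succ m ih =>
      apply ih
      apply strip (prime_X' i) (hfx i)
      have : X i ^ (m + 1) * c = X i * (X i ^ m * c) := by ring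
      rwa [this] at h

lemma strip_S {f : MvPolynomial (Fin n) k} (hfx : ∀ i : Fin n, ¬ X i ∣ f)
    (e : ℕ) {c : MvPolynomial (Fin n) k} (h : f ∣ (∏ i : Fin n, X i) ^ e * c) : f ∣ c := by
  rw [← Finset.prod_pow] at h
  have key : ∀ t : Finset (Fin n), ∀ c : MvPolynomial (Fin n) k,
      f ∣ (∏ i ∈ t, X i ^ e) * c → f ∣ c := by
    intro t
    induction t using Finset.induction with
    | empty => intro c hc; simpa using hc
    | insert a t' hx ih =>
        intro c hc
        rw [Finset.prod_insert hx] at hc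
        apply ih
        apply strip_Xpow hfx a e
        rw [mul_assoc] at hc
        exact hc
  exact key _ _ h



noncomputable def theta (i1 i2 : Fin n) (a : ℕ) :
    MvPolynomial (Fin n) k →ₐ[k] MvPolynomial (Fin n) k :=
  aeval (fun j => if j = i2 then -(X i1 ^ a) else X j)

noncomputable def Phi (i1 i2 : Fin n) (a : ℕ) (μ : Fin n →₀ ℕ) : Fin n →₀ ℕ :=
  Finsupp.single i1 (a * μ i2) + μ.erase i2

lemma neg_X_pow (i1 : Fin n) (a m : ℕ) :
    (-(X i1 ^ a) : MvPolynomial (Fin n) k) ^ m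
      = C ((-1 : k) ^ m) * monomial (Finsupp.single i1 (a * m)) 1 := by
  rw [neg_pow, ← pow_mul, X_pow_eq_monomial]
  simp [map_pow]

lemma theta_monomial (i1 i2 : Fin n) (a : ℕ) (h12 : i1 ≠ i2) (μ : Fin n →₀ ℕ) (c : k) :
    theta (k := k) i1 i2 a (monomial μ c)
      = monomial (Phi i1 i2 a μ) ((-1 : k) ^ (μ i2) * c) := by
  rw [theta, aeval_monomial]
  rw [← Finsupp.mul_prod_erase' μ i2 _ (fun i => pow_zero _)]
  rw [if_pos rfl, neg_X_pow]
  have herase : ((μ.erase i2).prod fun j e => (if j = i2 then -(X i1 ^ a) else X j) ^ e)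
      = monomial (μ.erase i2) (1 : k) := by
    rw [← prod_X_pow_eq_monomial]
    apply Finset.prod_congr rfl
    intro j hj
    rw [Finsupp.support_erase] at hj
    simp only []
    rw [if_neg (Finset.ne_of_mem_erase hj)]
  rw [herase, algebraMap_eq, Phi]
  rw [mul_assoc, monomial_mul, mul_one, C_mul_monomial, C_mul_monomial]
  ring_nf

lemma Phi_inj (i1 i2 : Fin n) (a : ℕ) (h12 : i1 ≠ i2) {μ ν : Fin n →₀ ℕ}
    (hμ : μ i1 < a) (hν : ν i1 < a) (h : Phi i1 i2 a μ = Phi i1 i2 a ν) : μ = ν := by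
  have key : ∀ j, Phi i1 i2 a μ j = Phi i1 i2 a ν j := fun j => by rw [h]
  have h1 := key i1
  simp only [Phi, Finsupp.add_apply, Finsupp.single_apply, if_pos rfl, if_true,
    Finsupp.erase_ne h12] at h1
  -- h1 : a * μ i2 + μ i1 = a * ν i2 + ν i1
  have ha : 0 < a := lt_of_le_of_lt (Nat.zero_le _) hμ
  have h2 : μ i2 = ν i2 := by
    have e1 : (a * μ i2 + μ i1) / a = μ i2 := by
      rw [Nat.mul_add_div ha, Nat.div_eq_of_lt hμ, add_zero]
    have e2 : (a * ν i2 + ν i1) / a = ν i2 := by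
      rw [Nat.mul_add_div ha, Nat.div_eq_of_lt hν, add_zero]
    rw [← e1, ← e2, h1]
  have h3 : μ i1 = ν i1 := by
    rw [h2] at h1; omega
  ext j
  by_cases hj1 : j = i1
  · rw [hj1]; exact h3
  by_cases hj2 : j = i2
  · rw [hj2]; exact h2
  · have := key j
    simpa only [Phi, Finsupp.add_apply, Finsupp.single_apply, if_neg (Ne.symm hj1),
      Finsupp.erase_ne hj2, zero_add] using this

lemma nonvanish (i1 i2 : Fin n) (a : ℕ) (h12 : i1 ≠ i2) {q : MvPolynomial (Fin n) k}
    (hq : q ≠ 0) (hdeg : ∀ μ ∈ q.support, μ i1 < a) :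
    theta (k := k) i1 i2 a q ≠ 0 := by
  obtain ⟨μs, hμs⟩ := (support_nonempty.mpr hq)
  intro h0
  have hsum : theta (k := k) i1 i2 a q
      = ∑ μ ∈ q.support, monomial (Phi i1 i2 a μ) ((-1 : k) ^ (μ i2) * coeff μ q) := by
    conv_lhs => rw [as_sum q]
    rw [map_sum]
    exact Finset.sum_congr rfl fun μ _ => theta_monomial i1 i2 a h12 μ _
  have hc := congrArg (coeff (Phi i1 i2 a μs)) hsum
  rw [h0, coeff_zero, coeff_sum] at hc
  rw [Finset.sum_eq_single μs] at hc
  · rw [coeff_monomial, if_pos rfl] at hc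
    exact (mul_ne_zero (pow_ne_zero _ (neg_ne_zero.mpr one_ne_zero))
      (mem_support_iff.mp hμs)) hc.symm
  · intro μ hμ hne
    rw [coeff_monomial, if_neg]
    intro heq
    exact hne (Phi_inj i1 i2 a h12 (hdeg μ hμ) (hdeg μs hμs) heq)
  · intro h; exact absurd hμs h



noncomputable def emap (i1 i2 : Fin n) (a : ℕ) (h12 : i1 ≠ i2) :
    MvPolynomial (Fin n) k ≃ₐ[k] MvPolynomial (Fin n) k :=
  AlgEquiv.ofAlgHom (aeval fun j => if j = i2 then X i2 - X i1 ^ a else X j)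
    (aeval fun j => if j = i2 then X i2 + X i1 ^ a else X j)
    (by
      apply algHom_ext
      intro j
      by_cases hj : j = i2
      · subst hj; simp [if_neg h12]
      · simp [if_neg hj])
    (by
      apply algHom_ext
      intro j
      by_cases hj : j = i2
      · subst hj; simp [if_neg h12]
      · simp [if_neg hj])

lemma emap_g2 (i1 i2 : Fin n) (a : ℕ) (h12 : i1 ≠ i2) :
    emap (k := k) i1 i2 a h12 (X i2 + X i1 ^ a) = X i2 := by
  simp [emap, AlgEquiv.ofAlgHom, if_neg h12]

lemma kill_emap (i1 i2 : Fin n) (a : ℕ) (h12 : i1 ≠ i2) (p : MvPolynomial (Fin n) k) :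
    kill i2 (emap (k := k) i1 i2 a h12 p) = theta i1 i2 a p := by
  have : (kill (k := k) i2).comp (emap (k := k) i1 i2 a h12).toAlgHom = theta i1 i2 a := by
    apply algHom_ext
    intro j
    by_cases hj : j = i2
    · subst hj
      simp [emap, AlgEquiv.ofAlgHom, theta, kill_X, if_neg h12]
    · simp [emap, AlgEquiv.ofAlgHom, theta, kill_X, if_neg hj]
  exact congrFun (congrArg DFunLike.coe this) p

lemma isRelPrime_g2 (i1 i2 : Fin n) (a : ℕ) (h12 : i1 ≠ i2) {q : MvPolynomial (Fin n) k}
    (hq : q ≠ 0) (hdeg : ∀ μ ∈ q.support, μ i1 < a) :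
    IsRelPrime q (X i2 + X i1 ^ a) := by
  have hX : ¬ (X i2 : MvPolynomial (Fin n) k) ∣ emap (k := k) i1 i2 a h12 q := by
    intro hd
    rw [X_dvd_iff_kill, kill_emap] at hd
    exact nonvanish i1 i2 a h12 hq hdeg hd
  intro d hdq hdg
  have h1 : emap (k := k) i1 i2 a h12 d ∣ X i2 := by
    rw [← emap_g2 i1 i2 a h12]
    exact map_dvd _ hdg
  obtain ⟨w, hw⟩ := h1
  rcases (prime_X' i2).irreducible.isUnit_or_isUnit hw with h | h
  · have := h.map (emap (k := k) i1 i2 a h12).symm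
    rwa [AlgEquiv.symm_apply_apply] at this
  · exfalso
    apply hX
    have h2 : (X i2 : MvPolynomial (Fin n) k) ∣ emap (k := k) i1 i2 a h12 d := by
      obtain ⟨wu, hwu⟩ := h
      refine ⟨↑wu⁻¹, ?_⟩
      rw [hw, ← hwu, mul_assoc]
      simp
    exact h2.trans (map_dvd _ hdq)

lemma modX0 {f : MvPolynomial (Fin n) k} (hfx : ∀ i : Fin n, ¬ X i ∣ f)
    (i0 i1 i2 : Fin n) (h10 : i1 ≠ i0) (h20 : i2 ≠ i0) (a T : ℕ)
    (hrp : IsRelPrime (kill i0 f) (X i2 + X i1 ^ a))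
    {w d : MvPolynomial (Fin n) k}
    (h : f ∣ w * (X i2 + X i1 ^ a) ^ T - d * X i0) : ∃ v, f ∣ w - v * X i0 := by
  obtain ⟨z, hz⟩ := h
  have hk : kill i0 w * (X i2 + X i1 ^ a) ^ T = kill i0 f * kill i0 z := by
    have h' := congrArg (kill (k := k) i0) hz
    simp only [map_sub, map_mul, map_pow, map_add, kill_X, if_pos rfl, if_true, if_neg h10,
      if_neg h20, mul_zero, sub_zero] at h'
    exact h'
  have hdvd : kill i0 f ∣ kill i0 w :=
    (hrp.pow_right).dvd_of_dvd_mul_right ⟨kill i0 z, hk⟩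
  obtain ⟨v1, hv1⟩ := hdvd
  have h2 : X i0 ∣ w - f * v1 := by
    have ha := X_dvd_sub_kill i0 w
    have hb := X_dvd_sub_kill i0 f
    have heq : w - f * v1 = (w - kill i0 w) - (f - kill i0 f) * v1 := by
      rw [hv1]; ring
    rw [heq]
    exact dvd_sub ha (hb.mul_right v1)
  obtain ⟨v, hv⟩ := h2
  exact ⟨v, ⟨v1, by linear_combination hv⟩⟩

lemma reg {f : MvPolynomial (Fin n) k} (hfx : ∀ i : Fin n, ¬ X i ∣ f)
    (i0 i1 i2 : Fin n) (h10 : i1 ≠ i0) (h20 : i2 ≠ i0) (a T : ℕ)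
    (hrp : IsRelPrime (kill i0 f) (X i2 + X i1 ^ a)) :
    ∀ (p : ℕ) (c d : MvPolynomial (Fin n) k),
      f ∣ c * (X i2 + X i1 ^ a) ^ T - d * X i0 ^ p → ∃ w, f ∣ c - w * X i0 ^ p := by
  intro p
  induction p with
  | zero => intro c d h; exact ⟨c, by simp⟩
  | succ p ih =>
      intro c d h
      obtain ⟨z, hz⟩ := h
      obtain ⟨w, h1, hh1⟩ := ih c (d * X i0) ⟨z, by linear_combination hz⟩
      have h3 : f ∣ X i0 ^ p * (w * (X i2 + X i1 ^ a) ^ T - d * X i0) :=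
        ⟨z - h1 * (X i2 + X i1 ^ a) ^ T, by linear_combination hz - ((X i2 + X i1 ^ a) ^ T) * hh1⟩
      have h4 : f ∣ w * (X i2 + X i1 ^ a) ^ T - d * X i0 := strip_Xpow hfx i0 p h3
      obtain ⟨v, h2, hh2⟩ := modX0 hfx i0 i1 i2 h10 h20 a T hrp h4
      exact ⟨v, ⟨h1 + h2 * X i0 ^ p, by linear_combination hh1 + (X i0 ^ p) * hh2⟩⟩



lemma main_aux {k : Type*} [Field k] {n : ℕ} (hn : 3 ≤ n)
    (f : MvPolynomial (Fin n) k) (hfx : ∀ i : Fin n, ¬ (X i ∣ f))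
    (R : Type*) [CommRing R] (pi : MvPolynomial (Fin n) k →+* R)
    (hpi : Function.Surjective pi)
    (hdvd : ∀ x y : MvPolynomial (Fin n) k, pi x = pi y ↔ f ∣ x - y)
    (L : Type*) [CommRing L] [Algebra R L]
    [IsLocalization.Away (pi (∏ i : Fin n, X i)) L]
    (u : L)
    (hu : ∀ i : Fin n, ∃ (a : R) (m : ℕ),
      u * algebraMap R L (pi (X i)) ^ m = algebraMap R L a) :
    ∃ a : R, u = algebraMap R L a := by
  classical
  set S : MvPolynomial (Fin n) k := ∏ i : Fin n, X i with hS
  set s : R := pi S with hs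
  set A : R →+* L := algebraMap R L with hA
  have h3 : (3 : ℕ) ≤ n := hn
  let i0 : Fin n := ⟨0, by omega⟩
  let i1 : Fin n := ⟨1, by omega⟩
  let i2 : Fin n := ⟨2, by omega⟩
  have h12 : i1 ≠ i2 := by simp [i1, i2, Fin.ext_iff]
  have h10 : i1 ≠ i0 := by simp [i1, i0, Fin.ext_iff]
  have h20 : i2 ≠ i0 := by simp [i2, i0, Fin.ext_iff]
  have hzero : ∀ x : MvPolynomial (Fin n) k, pi x = 0 ↔ f ∣ x := by
    intro x
    have := hdvd x 0
    rwa [map_zero, sub_zero] at this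
  have hsnzd : s ∈ nonZeroDivisors R := by
    rw [mem_nonZeroDivisors_iff_right]
    intro z hz
    obtain ⟨c, rfl⟩ := hpi z
    have hz' : pi (c * S) = 0 := by rw [map_mul]; exact hz
    rw [hzero] at hz'
    have hfc : f ∣ c := by
      apply strip_S hfx 1
      rw [pow_one, mul_comm]
      exact hz'
    rw [← hzero] at hfc
    exact hfc
  have hMle : Submonoid.powers s ≤ nonZeroDivisors R :=
    Submonoid.powers_le.mpr hsnzd
  have hinj : Function.Injective A := IsLocalization.injective L hMle
  obtain ⟨⟨r0, sp⟩, hsurj⟩ :=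
    IsLocalization.surj (M := Submonoid.powers s) (S := L) u
  obtain ⟨e, he⟩ := sp.2
  have hsurj' : u * A (s ^ e) = A r0 := by
    rw [← he] at hsurj; exact hsurj
  have hsurj'' : u * A s ^ e = A r0 := by rw [← map_pow]; exact hsurj'
  obtain ⟨rt, hrt⟩ := hpi r0
  obtain ⟨a0, m0, h0⟩ := hu i0
  obtain ⟨a1, m1, h1⟩ := hu i1
  obtain ⟨a2, m2, h2⟩ := hu i2
  obtain ⟨a0t, ha0t⟩ := hpi a0
  set f0 : MvPolynomial (Fin n) k := kill i0 f with hf0def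
  have hf0ne : f0 ≠ 0 := by
    intro h
    exact hfx i0 ((X_dvd_iff_kill i0 f).mpr h)
  set a : ℕ := f0.totalDegree + 1 with hadef
  have ha1 : 1 ≤ a := Nat.le_add_left 1 _
  have hdeg : ∀ μ ∈ f0.support, μ i1 < a := by
    intro μ hμ
    have h1' : μ i1 ≤ μ.sum fun _ e => e := by
      by_cases h : i1 ∈ μ.support
      · exact Finset.single_le_sum (fun _ _ => Nat.zero_le _) h
      · simp [Finsupp.notMem_support_iff.mp h]
    have h2' := le_totalDegree hμ
    omega
  have hrp : IsRelPrime f0 (X i2 + X i1 ^ a) := isRelPrime_g2 i1 i2 a h12 hf0ne hdeg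
  set g2 : MvPolynomial (Fin n) k := X i2 + X i1 ^ a with hg2
  set T : ℕ := m1 + m2 with hT
  have hxy : A (pi g2) = A (pi (X i2)) + A (pi (X i1)) ^ a := by
    rw [hg2, map_add, map_pow, map_add, map_pow]
  have hrange : u * A (pi g2) ^ T ∈ Set.range A := by
    rw [hxy, add_pow, Finset.mul_sum]
    apply Finset.sum_induction _ (fun z => z ∈ Set.range A)
    · rintro x y ⟨x', hx'⟩ ⟨y', hy'⟩
      exact ⟨x' + y', by rw [map_add, hx', hy']⟩
    · exact ⟨0, map_zero A⟩
    · intro p hp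
      by_cases hpm : m2 ≤ p
      · have hsplit : A (pi (X i2)) ^ p = A (pi (X i2)) ^ m2 * A (pi (X i2)) ^ (p - m2) := by
          rw [← pow_add]; congr 1; omega
        refine ⟨a2 * pi (X i2) ^ (p - m2) * pi (X i1) ^ (a * (T - p)) * (T.choose p : R), ?_⟩
        rw [map_mul, map_mul, map_mul, map_pow, map_pow, map_natCast, ← h2, hsplit,
          ← pow_mul]
        ring
      · have hm1 : m1 ≤ a * (T - p) := by
          have h' : m1 ≤ T - p := by omega
          calc m1 ≤ T - p := h'
            _ = 1 * (T - p) := (one_mul _).symm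
            _ ≤ a * (T - p) := Nat.mul_le_mul_right _ ha1
        have hsplit : (A (pi (X i1)) ^ a) ^ (T - p)
            = A (pi (X i1)) ^ m1 * A (pi (X i1)) ^ (a * (T - p) - m1) := by
          rw [← pow_mul, ← pow_add]; congr 1; omega
        refine ⟨a1 * pi (X i1) ^ (a * (T - p) - m1) * pi (X i2) ^ p * (T.choose p : R), ?_⟩
        rw [map_mul, map_mul, map_mul, map_pow, map_pow, map_natCast, ← h1, hsplit]
        ring
  obtain ⟨b2, hb2⟩ := hrange
  obtain ⟨b2t, hb2t⟩ := hpi b2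
  have E0 : f ∣ rt * X i0 ^ m0 - a0t * S ^ e := by
    rw [← hdvd]
    apply hinj
    simp only [map_mul, map_pow]
    rw [hrt, ha0t, ← hs, ← hsurj'', ← h0]
    ring
  have E2 : f ∣ rt * g2 ^ T - b2t * S ^ e := by
    rw [← hdvd]
    apply hinj
    simp only [map_mul, map_pow]
    rw [hrt, hb2t, ← hs, ← hsurj'', hb2]
    ring
  obtain ⟨z0, hz0⟩ := E0
  obtain ⟨z2, hz2⟩ := E2
  have ES : f ∣ S ^ e * (a0t * g2 ^ T - b2t * X i0 ^ m0) :=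
    ⟨X i0 ^ m0 * z2 - g2 ^ T * z0, by linear_combination X i0 ^ m0 * hz2 - g2 ^ T * hz0⟩
  have E3 : f ∣ a0t * g2 ^ T - b2t * X i0 ^ m0 := by
    rw [hS] at ES
    exact strip_S hfx e ES
  have E3' : f ∣ a0t * (X i2 + X i1 ^ a) ^ T - b2t * X i0 ^ m0 := by
    rw [← hg2]; exact E3
  obtain ⟨w, zw, hzw⟩ := reg hfx i0 i1 i2 h10 h20 a T hrp m0 a0t b2t E3'
  have E4 : f ∣ X i0 ^ m0 * (rt - w * S ^ e) :=
    ⟨z0 + zw * S ^ e, by linear_combination hz0 + S ^ e * hzw⟩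
  have E5 : f ∣ rt - w * S ^ e := strip_Xpow hfx i0 m0 E4
  have E6 : pi rt = pi w * s ^ e := by
    rw [hs, ← map_pow, ← map_mul, hdvd]
    exact E5
  refine ⟨pi w, ?_⟩
  have hunit : IsUnit (A (s ^ e)) :=
    IsLocalization.map_units (M := Submonoid.powers s) L ⟨s ^ e, ⟨e, rfl⟩⟩
  apply hunit.mul_right_cancel
  rw [hsurj', ← hrt, E6, map_mul]

end Stmt3Aux

open Stmt3Aux in
/-- Let `R = k[x₁,...,xₙ]/(f)` with `n ≥ 3`, `f ≠ 0` and no `xᵢ` dividing `f`, and let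
`s` be the image of `x₁⋯xₙ`. If `u ∈ R[1/s]` lies in the image of every `R[1/xᵢ] → R[1/s]`
(i.e. for each `i` it can be written as `a/xᵢᵐ`), then `u` comes from `R`. -/
theorem stmt_3 {k : Type*} [Field k] {n : ℕ} (hn : 3 ≤ n)
    (f : MvPolynomial (Fin n) k) (hf0 : f ≠ 0) (hfx : ∀ i : Fin n, ¬ (X i ∣ f))
    (u : Localization.Away
      (Ideal.Quotient.mk (Ideal.span {f}) (∏ i : Fin n, X i)))
    (hu : ∀ i : Fin n, ∃ (a : MvPolynomial (Fin n) k ⧸ Ideal.span {f}) (m : ℕ),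
      u * algebraMap (MvPolynomial (Fin n) k ⧸ Ideal.span {f})
            (Localization.Away (Ideal.Quotient.mk (Ideal.span {f}) (∏ i : Fin n, X i)))
            (Ideal.Quotient.mk (Ideal.span {f}) (X i)) ^ m
        = algebraMap (MvPolynomial (Fin n) k ⧸ Ideal.span {f})
            (Localization.Away (Ideal.Quotient.mk (Ideal.span {f}) (∏ i : Fin n, X i))) a) :
    ∃ a : MvPolynomial (Fin n) k ⧸ Ideal.span {f},
      u = algebraMap (MvPolynomial (Fin n) k ⧸ Ideal.span {f})
            (Localization.Away (Ideal.Quotient.mk (Ideal.span {f}) (∏ i : Fin n, X i))) a := by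
  refine main_aux hn f hfx _ (Ideal.Quotient.mk (Ideal.span {f}))
    Ideal.Quotient.mk_surjective ?_ _ u hu
  intro x y
  rw [Ideal.Quotient.eq, Ideal.mem_span_singleton]
end

section
/- Let k be an infinite field and n, m positive integers. In the polynomial ring k[x_1, ..., x_n], the k-linear span of the set of m-th powers of linear forms { (c_1 x_1 + ⋯ + c_n x_n)^m : c_1, ..., c_n ∈ k } equals the k-linear span of the set of monomials { x_1^{i_1} ⋯ x_n^{i_n} : i_1 + ⋯ + i_n = m and the multinomial coefficient m!/(i_1!⋯i_n!) is nonzero in k }. -/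
open MvPolynomial Finset

private lemma expand_pow_aux {k : Type*} [Field k] {n m : ℕ} (c : Fin n → k) :
    ((∑ i, C (c i) * X i : MvPolynomial (Fin n) k)) ^ m
      = ∑ f ∈ piAntidiag (univ : Finset (Fin n)) m,
          C ((Nat.multinomial univ f : k) * ∏ i, c i ^ f i) *
            monomial (Finsupp.equivFunOnFinite.symm f) 1 := by
  rw [Finset.sum_pow_eq_sum_piAntidiag]
  refine Finset.sum_congr rfl fun f hf => ?_
  rw [monomial_eq, Finsupp.prod_fintype _ _ (fun i => pow_zero _)]
  simp only [Finsupp.coe_equivFunOnFinite_symm, map_mul, map_prod, map_pow, C_1, mul_one,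
    ← C_eq_coe_nat, mul_pow, Finset.prod_mul_distrib]
  ring

/-- Over an infinite field `k`, the span of the `m`-th powers of linear forms in
`k[x₁, ..., xₙ]` equals the span of the degree-`m` monomials whose multinomial
coefficient is nonzero in `k`. -/
theorem stmt_4 {k : Type*} [Field k] [Infinite k] {n m : ℕ} (hn : 0 < n) (hm : 0 < m) :
    Submodule.span k
        {p : MvPolynomial (Fin n) k |
          ∃ c : Fin n → k, p = (∑ i, C (c i) * X i) ^ m}
      = Submodule.span k
        {p : MvPolynomial (Fin n) k |
          ∃ d : Fin n →₀ ℕ, (∑ i, d i) = m ∧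
            ((Nat.multinomial Finset.univ d : ℕ) : k) ≠ 0 ∧
            p = monomial d 1} := by
  apply le_antisymm
  · -- powers lie in the monomial span
    rw [Submodule.span_le]
    rintro p ⟨c, rfl⟩
    rw [SetLike.mem_coe, expand_pow_aux]
    refine Submodule.sum_mem _ fun f hf => ?_
    by_cases h : ((Nat.multinomial univ f : ℕ) : k) = 0
    · simp [h]
    · rw [C_mul_monomial, mul_one, ← mul_one ((Nat.multinomial univ f : k) * ∏ i, c i ^ f i),
        ← smul_eq_mul, ← smul_monomial]
      refine Submodule.smul_mem _ _ (Submodule.subset_span ?_)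
      refine ⟨Finsupp.equivFunOnFinite.symm f, ?_, ?_, rfl⟩
      · simpa using (Finset.mem_piAntidiag.mp hf).1
      · simpa using h
  · -- monomials lie in the span of powers; use dual annihilator
    rw [Submodule.span_le]
    rintro p ⟨d, hd, hne, rfl⟩
    rw [SetLike.mem_coe, ← Subspace.forall_mem_dualAnnihilator_apply_eq_zero_iff]
    intro φ hφ
    rw [Submodule.mem_dualAnnihilator] at hφ
    have hpow : ∀ c : Fin n → k, φ ((∑ i, C (c i) * X i) ^ m) = 0 := fun c =>
      hφ _ (Submodule.subset_span ⟨c, rfl⟩)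
    -- the auxiliary polynomial whose coefficients are multinomial * φ(monomial)
    set Q : MvPolynomial (Fin n) k :=
      ∑ f ∈ piAntidiag (univ : Finset (Fin n)) m,
        C ((Nat.multinomial univ f : k) * φ (monomial (Finsupp.equivFunOnFinite.symm f) 1)) *
          monomial (Finsupp.equivFunOnFinite.symm f) 1 with hQ
    have hQ0 : Q = 0 := by
      apply MvPolynomial.funext
      intro c
      have hzero := hpow c
      rw [expand_pow_aux c, map_sum] at hzero
      rw [map_zero, hQ, map_sum, ← hzero]
      refine Finset.sum_congr rfl fun f hf => ?_
      rw [eval_mul, eval_C, ← smul_eq_C_mul, map_smul, smul_eq_mul, eval_monomial]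
      rw [Finsupp.prod_fintype _ _ (fun i => pow_zero _)]
      simp only [Finsupp.coe_equivFunOnFinite_symm, one_mul]
      ring
    -- extract the coefficient at d
    have hdmem : (d : Fin n → ℕ) ∈ piAntidiag (univ : Finset (Fin n)) m := by
      rw [Finset.mem_piAntidiag]
      exact ⟨hd, fun i _ => Finset.mem_univ i⟩
    have hcoeff : MvPolynomial.coeff d Q
        = (Nat.multinomial univ d : k) * φ (monomial d 1) := by
      rw [hQ, MvPolynomial.coeff_sum]
      have hterm : ∀ f ∈ piAntidiag (univ : Finset (Fin n)) m,
          MvPolynomial.coeff d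
            (C ((Nat.multinomial univ f : k) *
                φ (monomial (Finsupp.equivFunOnFinite.symm f) 1)) *
              monomial (Finsupp.equivFunOnFinite.symm f) 1)
          = if f = ⇑d then
              (Nat.multinomial univ f : k) *
                φ (monomial (Finsupp.equivFunOnFinite.symm f) 1)
            else 0 := by
        intro f _
        rw [C_mul_monomial, mul_one, MvPolynomial.coeff_monomial]
        congr 1
        simp only [eq_iff_iff]
        rw [Equiv.symm_apply_eq]
        constructor <;> intro h <;> exact h
      rw [Finset.sum_congr rfl hterm, Finset.sum_ite_eq' (piAntidiag univ m) (⇑d)]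
      rw [if_pos hdmem]
      simp
    rw [hQ0] at hcoeff
    simp only [MvPolynomial.coeff_zero] at hcoeff
    rcases mul_eq_zero.mp hcoeff.symm with h | h
    · exact absurd h hne
    · exact h
end

section
/- Let k be a field and m a positive integer such that either k has characteristic 0 or k has characteristic p with m < p. Let R be a commutative k-algebra and I an ideal of R. Then the m-th bracket power I^{[m]} equals the ordinary power I^m. -/
open Finset

lemma multinomial_subset' {α : Type*} [DecidableEq α] {s t : Finset α} (h : s ⊆ t) (f : α → ℕ)
    (hf : ∀ i ∈ t, i ∉ s → f i = 0) : Nat.multinomial s f = Nat.multinomial t f := by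
  have hprod : ∏ i ∈ t, (f i).factorial = ∏ i ∈ s, (f i).factorial := by
    refine (Finset.prod_subset h fun i hi his => ?_).symm
    rw [hf i hi his]; rfl
  have hsum : ∑ i ∈ t, f i = ∑ i ∈ s, f i :=
    (Finset.sum_subset h fun i hi his => hf i hi his).symm
  have h1 := Nat.multinomial_spec s f
  have h2 := Nat.multinomial_spec t f
  rw [hprod, hsum] at h2
  have hpos : 0 < ∏ i ∈ s, (f i).factorial :=
    Finset.prod_pos fun i _ => (f i).factorial_pos
  exact Nat.eq_of_mul_eq_mul_left hpos (h1.trans h2.symm)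

lemma sum_subsets_neg_one_pow {α : Type*} [DecidableEq α] [Fintype α] {R : Type*} [CommRing R]
    (T : Finset α) :
    ∑ S ∈ (Finset.univ : Finset α).powerset.filter (fun S => T ⊆ S), (-1 : R) ^ S.card
      = if T = Finset.univ then (-1 : R) ^ (Fintype.card α) else 0 := by
  classical
  have hbij : ∑ S ∈ (Finset.univ : Finset α).powerset.filter (fun S => T ⊆ S), (-1 : R) ^ S.card
      = ∑ U ∈ Tᶜ.powerset, (-1 : R) ^ (T.card + U.card) := by
    refine Finset.sum_nbij' (fun S => S \ T) (fun U => T ∪ U) ?_ ?_ ?_ ?_ ?_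
    · intro S hS
      simp only [mem_filter, mem_powerset] at hS
      simp only [mem_powerset]
      intro i hi
      simp only [mem_sdiff] at hi
      simp [hi.2]
    · intro U hU
      simp only [mem_powerset] at hU
      simp only [mem_filter, mem_powerset]
      exact ⟨subset_univ _, subset_union_left⟩
    · intro S hS
      simp only [mem_filter, mem_powerset] at hS
      exact Finset.union_sdiff_of_subset hS.2
    · intro U hU
      simp only [mem_powerset] at hU
      refine Finset.union_sdiff_cancel_left ?_
      exact Finset.disjoint_left.mpr fun a ha haU => by
        have := hU haU; simp at this; exact this ha
    · intro S hS
      simp only [mem_filter, mem_powerset] at hS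
      congr 1
      have := card_le_card hS.2
      rw [Finset.card_sdiff_of_subset hS.2]
      omega
  rw [hbij]
  simp_rw [pow_add, ← Finset.mul_sum]
  have : ∑ U ∈ Tᶜ.powerset, (-1 : R) ^ U.card
      = if Tᶜ = ∅ then 1 else 0 := by
    have hz := Finset.sum_powerset_neg_one_pow_card (x := Tᶜ)
    have : ((∑ U ∈ Tᶜ.powerset, (-1 : ℤ) ^ U.card : ℤ) : R)
        = ∑ U ∈ Tᶜ.powerset, (-1 : R) ^ U.card := by push_cast; ring_nf
    rw [← this, hz]
    split <;> simp
  rw [this]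
  by_cases hT : T = Finset.univ
  · have hTc : Tᶜ = ∅ := by simp [hT]
    simp [hT, hTc, ← Finset.card_univ]
  · have hTc : Tᶜ ≠ ∅ := by
      intro h
      exact hT (by simpa [Finset.compl_eq_empty_iff] using h)
    simp [hT, hTc]

lemma polar {R : Type*} [CommRing R] (m : ℕ) (x : Fin m → R) :
    ∑ S ∈ (Finset.univ : Finset (Fin m)).powerset,
      (-1 : R) ^ (m - S.card) * (∑ i ∈ S, x i) ^ m = (m.factorial : R) * ∏ i, x i := by
  classical
  have hsign : ∀ S ∈ (Finset.univ : Finset (Fin m)).powerset,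
      (-1 : R) ^ (m - S.card) * (∑ i ∈ S, x i) ^ m
        = (-1 : R) ^ m * ((-1 : R) ^ S.card * (∑ i ∈ S, x i) ^ m) := by
    intro S hS
    have hc : S.card ≤ m := by
      simpa using card_le_card (mem_powerset.mp hS)
    calc (-1 : R) ^ (m - S.card) * (∑ i ∈ S, x i) ^ m
        = ((-1 : R) ^ (m - S.card) * ((-1) ^ S.card * (-1) ^ S.card)) * (∑ i ∈ S, x i) ^ m := by
          rw [← pow_add, ← two_mul, pow_mul, neg_one_sq, one_pow, mul_one]
      _ = (-1 : R) ^ m * ((-1 : R) ^ S.card * (∑ i ∈ S, x i) ^ m) := by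
          rw [← mul_assoc, ← mul_assoc, ← pow_add, Nat.sub_add_cancel hc]
  rw [Finset.sum_congr rfl hsign, ← Finset.mul_sum]
  -- rewrite each inner power as a sum over piAntidiag univ m
  set g : (Fin m → ℕ) → R := fun k => (Nat.multinomial Finset.univ k : R) * ∏ i, x i ^ k i with hg
  have hexp : ∀ S ∈ (Finset.univ : Finset (Fin m)).powerset,
      (-1 : R) ^ S.card * (∑ i ∈ S, x i) ^ m
        = ∑ k ∈ piAntidiag Finset.univ m,
            (if ∀ i, k i ≠ 0 → i ∈ S then (-1 : R) ^ S.card else 0) * g k := by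
    intro S _
    rw [Finset.sum_pow_eq_sum_piAntidiag S x m]
    have hsub : piAntidiag S m = (piAntidiag (Finset.univ : Finset (Fin m)) m).filter
        (fun k => ∀ i, k i ≠ 0 → i ∈ S) := by
      ext k
      rw [Finset.mem_piAntidiag, Finset.mem_filter, Finset.mem_piAntidiag]
      constructor
      · rintro ⟨hsum, hsupp⟩
        have hsum' : ∑ i, k i = m := by
          have h := Finset.sum_subset (subset_univ S) fun i _ hi =>
            not_imp_comm.1 (hsupp i) hi
          rw [← h]; exact hsum
        exact ⟨⟨hsum', fun i _ => mem_univ i⟩, hsupp⟩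
      · rintro ⟨⟨hsum, _⟩, hsupp⟩
        have hsum' : ∑ i ∈ S, k i = m := by
          have h := Finset.sum_subset (subset_univ S) fun i _ hi =>
            not_imp_comm.1 (hsupp i) hi
          rw [h]; exact hsum
        exact ⟨hsum', hsupp⟩
    rw [hsub, Finset.mul_sum, Finset.sum_filter]
    refine Finset.sum_congr rfl fun k hk => ?_
    by_cases hks : ∀ i, k i ≠ 0 → i ∈ S
    · simp only [if_pos hks, hg]
      have h1 : Nat.multinomial S k = Nat.multinomial Finset.univ k :=
        multinomial_subset' (subset_univ S) k fun i _ hi => by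
          by_contra h; exact hi (hks i h)
      have h2 : ∏ i ∈ S, x i ^ k i = ∏ i, x i ^ k i := by
        refine Finset.prod_subset (subset_univ S) fun i _ hi => ?_
        simp [not_imp_comm.1 (hks i) hi]
      rw [h1, h2]
    · simp [if_neg hks]
  rw [Finset.sum_congr rfl hexp, Finset.sum_comm]
  have hinner : ∀ k ∈ piAntidiag (Finset.univ : Finset (Fin m)) m,
      ∑ S ∈ (Finset.univ : Finset (Fin m)).powerset,
        (if ∀ i, k i ≠ 0 → i ∈ S then (-1 : R) ^ S.card else 0) * g k
      = (if k = fun _ => 1 then (-1 : R) ^ m else 0) * g k := by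
    intro k hk
    rw [← Finset.sum_mul]
    congr 1
    rw [← Finset.sum_filter]
    have hcond : ∀ S : Finset (Fin m), (∀ i, k i ≠ 0 → i ∈ S) ↔
        (Finset.univ.filter fun i => k i ≠ 0) ⊆ S := by
      intro S; constructor
      · intro h i hi; simp only [mem_filter, mem_univ, true_and] at hi; exact h i hi
      · intro h i hi; exact h (by simp [hi])
    simp_rw [Finset.filter_congr fun S _ => hcond S]
    rw [sum_subsets_neg_one_pow]
    rw [Finset.mem_piAntidiag] at hk
    have : ((Finset.univ.filter fun i => k i ≠ 0) = Finset.univ) ↔ (k = fun _ => 1) := by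
      constructor
      · intro hT
        have hall : ∀ i : Fin m, 1 ≤ k i := by
          intro i
          have : i ∈ Finset.univ.filter fun i => k i ≠ 0 := by
            rw [hT]; exact mem_univ i
          simp only [mem_filter] at this
          omega
        funext i
        have := (Finset.sum_eq_sum_iff_of_le fun i _ => hall i).mp ?_ i (mem_univ i)
        · omega
        · rw [hk.1]; simp [Finset.card_univ]
      · intro hk1
        ext i
        simp [hk1]
    rw [if_congr this rfl rfl]
    congr 1
    simp
  rw [Finset.sum_congr rfl hinner]
  have hone : (fun _ => 1 : Fin m → ℕ) ∈ piAntidiag (Finset.univ : Finset (Fin m)) m := by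
    rw [Finset.mem_piAntidiag]
    constructor
    · simp [Finset.card_univ]
    · intro i _; exact mem_univ i
  rw [Finset.sum_eq_single (fun _ => 1 : Fin m → ℕ)]
  · simp only [if_pos rfl, hg]
    have hmult : Nat.multinomial (Finset.univ : Finset (Fin m)) (fun _ => 1) = m.factorial := by
      have := Nat.multinomial_spec (Finset.univ : Finset (Fin m)) (fun _ => 1)
      simpa [Finset.card_univ] using this
    have hns : (-1 : R) ^ m * (-1 : R) ^ m = 1 := by
      rw [← pow_add, ← two_mul, pow_mul, neg_one_sq, one_pow]
    simp only [hmult, pow_one, if_true]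
    rw [← mul_assoc, hns, one_mul]
  · intro k _ hkne
    rw [if_neg hkne, zero_mul]
  · intro h; exact absurd hone h

/-- If `k` is a field of characteristic `0`, or of characteristic `p` with `m < p`,
then for any ideal `I` of a commutative `k`-algebra `R`, the `m`-th bracket power
(the ideal generated by `m`-th powers of elements of `I`) equals `I ^ m`. -/
theorem stmt_5 {k : Type*} [Field k] {m : ℕ} (hm : 0 < m)
    (hchar : ringChar k = 0 ∨ m < ringChar k)
    {R : Type*} [CommRing R] [Algebra k R] (I : Ideal R) :
    Ideal.span {x : R | ∃ r ∈ I, x = r ^ m} = I ^ m := by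
  set J := Ideal.span {x : R | ∃ r ∈ I, x = r ^ m} with hJ
  apply le_antisymm
  · rw [hJ, Ideal.span_le]
    rintro x ⟨r, hr, rfl⟩
    exact Ideal.pow_mem_pow hr m
  · -- `m!` is invertible in `k`
    have hfac : (m.factorial : k) ≠ 0 := by
      rcases hchar with h0 | hp
      · haveI : CharP k 0 := h0 ▸ ringChar.charP k
        haveI : CharZero k := CharP.charP_to_charZero k
        exact_mod_cast (Nat.cast_ne_zero (R := k)).mpr m.factorial_pos.ne'
      · have hp' : (ringChar k).Prime := by
          rcases CharP.char_is_prime_or_zero k (ringChar k) with h | h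
          · exact h
          · omega
        rw [Ne, CharP.cast_eq_zero_iff k (ringChar k), hp'.dvd_factorial]
        omega
    have hu : algebraMap k R ((m.factorial : k)⁻¹) * (m.factorial : R) = 1 := by
      rw [show ((m.factorial : R)) = algebraMap k R (m.factorial : k) by
        rw [map_natCast], ← map_mul, inv_mul_cancel₀ hfac, map_one]
    rw [Submodule.pow_eq_span_pow_set, Submodule.span_le]
    intro a ha
    rw [Set.mem_pow] at ha
    obtain ⟨f, hf⟩ := ha
    rw [List.prod_ofFn] at hf
    have hfI : ∀ i, (f i : R) ∈ I := fun i => (f i).2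
    have key : (m.factorial : R) * ∏ i, (f i : R) ∈ J := by
      rw [← polar]
      refine Ideal.sum_mem _ fun S hS => Ideal.mul_mem_left _ _ ?_
      exact Ideal.subset_span ⟨∑ i ∈ S, (f i : R), I.sum_mem fun i _ => hfI i, rfl⟩
    have : a = algebraMap k R ((m.factorial : k)⁻¹) * ((m.factorial : R) * ∏ i, (f i : R)) := by
      rw [← mul_assoc, hu, one_mul, hf]
    rw [this]
    exact Ideal.mul_mem_left _ _ key
end

section
/- Let a and c be coprime positive integers and let E = { i·a + j·c : i, j ∈ ℕ } ⊆ ℤ be the numerical semigroup generated by a and c. If m is an integer with 1 ≤ m ≤ min{ac − a, ac − c}, then (ac − a − m ∈ E and ac − c − m ∈ E) if and only if ac − a − c − m ∈ E. -/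
private lemma notboth (a c : ℕ) (ha : 0 < a) (hc : 0 < c) (hac : Nat.Coprime a c)
    (n : ℤ) (h1 : ∃ i j : ℕ, n = i * a + j * c)
    (h2 : ∃ i j : ℕ, (a:ℤ)*c - a - c - n = i * a + j * c) : False := by
  obtain ⟨i, j, hij⟩ := h1
  obtain ⟨i', j', hij'⟩ := h2
  have hco : IsCoprime (a : ℤ) (c : ℤ) := Nat.isCoprime_iff_coprime.mpr hac
  have key : (a:ℤ) * c = ((i:ℤ) + i' + 1) * a + ((j:ℤ) + j' + 1) * c := by
    push_cast at hij hij' ⊢; linarith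
  have hd1 : (a:ℤ) ∣ ((j:ℤ) + j' + 1) * c := ⟨c - ((i:ℤ) + i' + 1), by linarith [key]⟩
  have hd1' : (a:ℤ) ∣ ((j:ℤ) + j' + 1) := hco.dvd_of_dvd_mul_right hd1
  have hd2 : (c:ℤ) ∣ ((i:ℤ) + i' + 1) * a := ⟨a - ((j:ℤ) + j' + 1), by linarith [key]⟩
  have hd2' : (c:ℤ) ∣ ((i:ℤ) + i' + 1) := hco.symm.dvd_of_dvd_mul_right hd2
  have h1' : (a:ℤ) ≤ (j:ℤ) + j' + 1 := Int.le_of_dvd (by positivity) hd1'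
  have h2' : (c:ℤ) ≤ (i:ℤ) + i' + 1 := Int.le_of_dvd (by positivity) hd2'
  have ha' : (0:ℤ) < a := by exact_mod_cast ha
  have hc' : (0:ℤ) < c := by exact_mod_cast hc
  nlinarith [key]

private lemma atleast (a c : ℕ) (ha : 0 < a) (hc : 0 < c) (hac : Nat.Coprime a c) (n : ℤ) :
    (∃ i j : ℕ, n = i * a + j * c) ∨ (∃ i j : ℕ, (a:ℤ)*c - a - c - n = i * a + j * c) := by
  obtain ⟨u, v, huv⟩ := Nat.isCoprime_iff_coprime.mpr hac
  have ha' : (0:ℤ) < a := by exact_mod_cast ha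
  set j0 : ℤ := (n * v) % a with hj0
  have hj0nonneg : 0 ≤ j0 := Int.emod_nonneg _ (by exact_mod_cast ha.ne')
  have hj0lt : j0 < a := Int.emod_lt_of_pos _ ha'
  set i0 : ℤ := n * u + (n * v / a) * c with hi0
  have hrep : n = i0 * a + j0 * c := by
    have h := Int.mul_ediv_add_emod (n * v) (a : ℤ)
    rw [hi0, hj0]
    linear_combination (-n) * huv - c * h
  by_cases hi : 0 ≤ i0
  · exact Or.inl ⟨i0.toNat, j0.toNat, by
      rw [Int.toNat_of_nonneg hi, Int.toNat_of_nonneg hj0nonneg]; exact hrep⟩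
  · refine Or.inr ⟨(-i0 - 1).toNat, ((a:ℤ) - 1 - j0).toNat, ?_⟩
    rw [Int.toNat_of_nonneg (by linarith), Int.toNat_of_nonneg (by linarith)]
    linear_combination (-1 : ℤ) * hrep

private lemma sym (a c : ℕ) (ha : 0 < a) (hc : 0 < c) (hac : Nat.Coprime a c) (n : ℤ) :
    (∃ i j : ℕ, n = i * a + j * c) ↔ ¬ (∃ i j : ℕ, (a:ℤ)*c - a - c - n = i * a + j * c) := by
  constructor
  · exact fun h1 h2 => notboth a c ha hc hac n h1 h2
  · intro h2
    rcases atleast a c ha hc hac n with h | h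
    · exact h
    · exact absurd h h2

/-- For coprime positive integers `a, c`, with `E = ℕa + ℕc ⊆ ℤ` the numerical semigroup
generated by `a` and `c`, and `1 ≤ m ≤ min (ac − a) (ac − c)`:
`ac − a − m ∈ E` and `ac − c − m ∈ E` if and only if `ac − a − c − m ∈ E`. -/
theorem stmt_6 (a c : ℕ) (ha : 0 < a) (hc : 0 < c) (hac : Nat.Coprime a c)
    (m : ℤ) (hm1 : 1 ≤ m)
    (hm2 : m ≤ min ((a : ℤ) * c - a) ((a : ℤ) * c - c)) :
    ((a : ℤ) * c - a - m ∈ {z : ℤ | ∃ i j : ℕ, z = i * a + j * c} ∧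
        (a : ℤ) * c - c - m ∈ {z : ℤ | ∃ i j : ℕ, z = i * a + j * c}) ↔
      (a : ℤ) * c - a - c - m ∈ {z : ℤ | ∃ i j : ℕ, z = i * a + j * c} := by
  simp only [Set.mem_setOf_eq]
  have e1 : ((a:ℤ)*c - a - m ∈ {z : ℤ | ∃ i j : ℕ, z = i * a + j * c}) ↔
      ¬ (∃ i j : ℕ, m - c = i * a + j * c) := by
    have h := sym a c ha hc hac ((a:ℤ)*c - a - m)
    rw [show (a:ℤ)*c - a - c - ((a:ℤ)*c - a - m) = m - c by ring] at h
    exact h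
  have e2 : ((a:ℤ)*c - c - m ∈ {z : ℤ | ∃ i j : ℕ, z = i * a + j * c}) ↔
      ¬ (∃ i j : ℕ, m - a = i * a + j * c) := by
    have h := sym a c ha hc hac ((a:ℤ)*c - c - m)
    rw [show (a:ℤ)*c - a - c - ((a:ℤ)*c - c - m) = m - a by ring] at h
    exact h
  have e3 : ((a:ℤ)*c - a - c - m ∈ {z : ℤ | ∃ i j : ℕ, z = i * a + j * c}) ↔
      ¬ (∃ i j : ℕ, m = i * a + j * c) := by
    have h := sym a c ha hc hac ((a:ℤ)*c - a - c - m)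
    rw [show (a:ℤ)*c - a - c - ((a:ℤ)*c - a - c - m) = m by ring] at h
    exact h
  rw [show ((a:ℤ)*c - a - c - m) = ((a:ℤ)*c - a - c - m) from rfl] at *
  simp only [Set.mem_setOf_eq] at e1 e2 e3
  rw [e1, e2, e3]
  constructor
  · rintro ⟨hx, hy⟩ ⟨i, j, hij⟩
    rcases Nat.eq_zero_or_pos i with hi0 | hipos
    · subst hi0
      rcases Nat.eq_zero_or_pos j with hj0 | hjpos
      · subst hj0; simp at hij; omega
      · exact hx ⟨0, j - 1, by push_cast [Nat.cast_sub hjpos]; push_cast at hij; linarith⟩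
    · exact hy ⟨i - 1, j, by push_cast [Nat.cast_sub hipos]; push_cast at hij; linarith⟩
  · intro hm
    constructor
    · rintro ⟨i, j, hij⟩
      exact hm ⟨i, j + 1, by push_cast at hij ⊢; linarith⟩
    · rintro ⟨i, j, hij⟩
      exact hm ⟨i + 1, j, by push_cast at hij ⊢; linarith⟩
end

section
/- Let a and c be coprime positive integers and let E = { i·a + j·c : i, j ∈ ℕ } ⊆ ℤ be the numerical semigroup generated by a and c. If m is an integer with 0 ≤ m ≤ ac − a − c, then ac − a − c − m ∈ E if and only if m ∉ E. -/
/-- In the canonical representation `n = x*a + y*c` with `0 ≤ x < c`,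
membership in the semigroup is equivalent to `0 ≤ y`. -/
lemma mem_iff_aux (a c : ℕ) (ha : 0 < a) (hc : 0 < c) (hac : Nat.Coprime a c)
    (n x y : ℤ) (hn : n = x * a + y * c) (hx0 : 0 ≤ x) (hxc : x < c) :
    (n ∈ {z : ℤ | ∃ i j : ℕ, z = i * a + j * c}) ↔ 0 ≤ y := by
  constructor
  · rintro ⟨i, j, hij⟩
    -- i = (i % c) + c * (i / c), rewrite to canonical form
    have hc' : (0:ℤ) < c := by exact_mod_cast hc
    have hi : (i:ℤ) = (i:ℤ) % c + c * ((i:ℤ) / c) := (Int.emod_add_mul_ediv _ _).symm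
    set x' := (i:ℤ) % c with hx'
    set q := (i:ℤ) / c with hq
    have hq0 : 0 ≤ q := Int.ediv_nonneg (by positivity) (le_of_lt hc')
    have hx'0 : 0 ≤ x' := Int.emod_nonneg _ (ne_of_gt hc')
    have hx'c : x' < c := Int.emod_lt_of_pos _ hc'
    have hn2 : n = x' * a + ((j:ℤ) + q * a) * c := by
      rw [hij]; rw [hi]; ring
    -- uniqueness: x = x'
    have hco : IsCoprime (a:ℤ) (c:ℤ) := Int.isCoprime_iff_gcd_eq_one.mpr hac
    have heq : (x - x') * a = (((j:ℤ) + q * a) - y) * c := by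
      have := hn.symm.trans hn2
      linarith [this]
    have hdvd : (c:ℤ) ∣ (x - x') := by
      have h1 : (c:ℤ) ∣ (x - x') * a := ⟨((j:ℤ) + q * a) - y, by linarith [heq]⟩
      exact (IsCoprime.dvd_of_dvd_mul_right hco.symm h1)
    have hxx' : x = x' := by
      rcases hdvd with ⟨k, hk⟩
      have hk0 : k = 0 := by nlinarith
      linarith [hk, hk0 ▸ hk]
    have hy : y = (j:ℤ) + q * a := by
      subst hxx'
      have ha' : (0:ℤ) < a := by exact_mod_cast ha
      have : y * c = ((j:ℤ) + q * a) * c := by linarith [hn.symm.trans hn2]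
      exact mul_right_cancel₀ (ne_of_gt hc') this
    rw [hy]; positivity
  · intro hy
    exact ⟨x.toNat, y.toNat, by rw [hn, Int.toNat_of_nonneg hx0, Int.toNat_of_nonneg hy]⟩

/-- For coprime positive integers `a, c`, with `E = ℕa + ℕc ⊆ ℤ` the numerical semigroup
generated by `a` and `c`, and `0 ≤ m ≤ ac − a − c`:
`ac − a − c − m ∈ E` if and only if `m ∉ E`. -/
theorem stmt_7 (a c : ℕ) (ha : 0 < a) (hc : 0 < c) (hac : Nat.Coprime a c)
    (m : ℤ) (hm1 : 0 ≤ m) (hm2 : m ≤ (a : ℤ) * c - a - c) :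
    (a : ℤ) * c - a - c - m ∈ {z : ℤ | ∃ i j : ℕ, z = i * a + j * c} ↔
      m ∉ {z : ℤ | ∃ i j : ℕ, z = i * a + j * c} := by
  have hc' : (0:ℤ) < c := by exact_mod_cast hc
  -- canonical representation of m
  have hco : IsCoprime (a:ℤ) (c:ℤ) := Int.isCoprime_iff_gcd_eq_one.mpr hac
  obtain ⟨u, v, huv⟩ := hco
  -- m = (m*u)*a + (m*v)*c ; reduce m*u mod c
  set x := (m * u) % c with hxdef
  set q := (m * u) / c with hqdef
  have hx0 : 0 ≤ x := Int.emod_nonneg _ (ne_of_gt hc')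
  have hxc : x < c := Int.emod_lt_of_pos _ hc'
  set y := m * v + q * a with hydef
  have hrep : m = x * a + y * c := by
    have h1 : m * u = x + c * q := (Int.emod_add_mul_ediv _ _).symm
    have h2 : m = (m * u) * a + (m * v) * c := by
      have := huv
      nlinarith [huv]
    rw [h2, h1]; ring
  have hrep2 : (a:ℤ) * c - a - c - m = (c - 1 - x) * a + (-1 - y) * c := by
    rw [hrep]; ring
  rw [mem_iff_aux a c ha hc hac _ _ _ hrep2 (by linarith) (by linarith),
    mem_iff_aux a c ha hc hac _ _ _ hrep hx0 hxc]
  omega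
end

section
/- Let n be a positive integer and let w_1, ..., w_n be nonnegative integers with w_1 + ⋯ + w_n = n. Assume that no w_i equals n, and that it is not the case that n is odd and w_i = 1 for every i. Then there exists a subset I ⊆ {1, ..., n} such that ∑_{i ∈ I} w_i = n − |I|. -/
theorem stmt_10_aux (m : ℕ) : ∀ {α : Type} [DecidableEq α] (S : Finset α) (w : α → ℕ),
    S.card = m → ∑ i ∈ S, w i = m → (∀ i ∈ S, w i ≠ m) →
    ¬ (Odd m ∧ ∀ i ∈ S, w i = 1) →
    ∃ I ⊆ S, ∑ i ∈ I, w i = m - I.card := by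
  induction m with
  | zero =>
    intro α _ S w hcard hsum _ _
    exact ⟨∅, by simp⟩
  | succ m ih =>
    intro α _ S w hcard hsum hwn hodd
    by_cases hA : ∃ k ∈ S, w k = m
    · -- some value equals m = (m+1) - 1
      obtain ⟨k, hkS, hk⟩ := hA
      refine ⟨{k}, by simpa using hkS, ?_⟩
      simp [hk]
    · push_neg at hA
      by_cases hzero : ∃ j ∈ S, w j = 0
      · -- there is a zero; find an element ≥ 2
        obtain ⟨j, hjS, hj⟩ := hzero
        have hsum' : ∑ i ∈ S.erase j, w i = m + 1 := by
          rw [Finset.sum_erase S (by simp [hj])]; exact hsum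
        have hcard' : (S.erase j).card = m := by
          rw [Finset.card_erase_of_mem hjS, hcard]
          omega
        have hbig : ∃ i ∈ S.erase j, 2 ≤ w i := by
          by_contra hcon
          push_neg at hcon
          have : ∑ i ∈ S.erase j, w i ≤ ∑ i ∈ S.erase j, 1 :=
            Finset.sum_le_sum (fun i hi => by have := hcon i hi; omega)
          simp [hcard'] at this
          omega
        obtain ⟨i, hiS', hi2⟩ := hbig
        have hiS : i ∈ S := Finset.mem_of_mem_erase hiS'
        set w' : α → ℕ := Function.update w i (w i - 1) with hw'
        have hupd_ne : ∀ k, k ≠ i → w' k = w k := fun k hk => Function.update_of_ne hk _ _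
        have hupd_i : w' i = w i - 1 := Function.update_self _ _ _
        -- sum of w' over S.erase j is m
        have hsum'' : ∑ k ∈ S.erase j, w' k = m := by
          rw [Finset.sum_update_of_mem hiS', ← Finset.erase_eq]
          have h1 : w i + ∑ k ∈ (S.erase j).erase i, w k = ∑ k ∈ S.erase j, w k :=
            Finset.add_sum_erase _ _ hiS'
          omega
        by_cases hdeg : Odd m ∧ ∀ k ∈ S.erase j, w' k = 1
        · -- degenerate case: w i = 2, all others in S.erase j are 1, m odd
          obtain ⟨hm_odd, hall1⟩ := hdeg
          have hwi : w i = 2 := by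
            have := hall1 i hiS'
            rw [hupd_i] at this
            omega
          have hm1 : m ≠ 1 := by
            intro h
            exact hwn i hiS (by omega)
          have hm3 : 3 ≤ m := by
            rcases hm_odd with ⟨t, ht⟩
            omega
          obtain ⟨t, ht⟩ := hm_odd
          -- take T ⊆ (S.erase j).erase i with card (m+1)/2 = t+1
          have hcard_ei : ((S.erase j).erase i).card = m - 1 := by
            rw [Finset.card_erase_of_mem hiS', hcard']
          have hex : ∃ T ⊆ (S.erase j).erase i, T.card = t + 1 :=
            Finset.exists_subset_card_eq (by omega)
          obtain ⟨T, hTsub, hTcard⟩ := hex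
          refine ⟨T, ?_, ?_⟩
          · intro x hx
            exact Finset.mem_of_mem_erase (Finset.mem_of_mem_erase (hTsub hx))
          · have hsumT : ∑ k ∈ T, w k = T.card := by
              rw [Finset.card_eq_sum_ones]
              refine Finset.sum_congr rfl (fun x hx => ?_)
              have hxi : x ≠ i := Finset.ne_of_mem_erase (hTsub hx)
              have hx' : x ∈ S.erase j := Finset.mem_of_mem_erase (hTsub hx)
              have := hall1 x hx'
              rwa [hupd_ne x hxi] at this
            rw [hsumT, hTcard]
            omega
        · -- apply IH
          have hwn' : ∀ k ∈ S.erase j, w' k ≠ m := by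
            intro k hk
            by_cases hki : k = i
            · rw [hki, hupd_i]
              have h1 := hA i hiS
              have h2 := hwn i hiS
              omega
            · rw [hupd_ne k hki]
              exact hA k (Finset.mem_of_mem_erase hk)
          obtain ⟨I', hI'sub, hI'sum⟩ := ih (S.erase j) w' hcard' hsum'' hwn' hdeg
          have hI'card : I'.card ≤ m := hcard' ▸ Finset.card_le_card hI'sub
          have hjI' : j ∉ I' := fun h => Finset.notMem_erase j S (hI'sub h)
          by_cases hiI' : i ∈ I'
          · -- take I = I'
            refine ⟨I', fun x hx => Finset.mem_of_mem_erase (hI'sub hx), ?_⟩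
            have hsplit : ∑ k ∈ I', w' k = w' i + ∑ k ∈ I'.erase i, w' k :=
              (Finset.add_sum_erase _ _ hiI').symm
            have hsplit2 : ∑ k ∈ I', w k = w i + ∑ k ∈ I'.erase i, w k :=
              (Finset.add_sum_erase _ _ hiI').symm
            have heq : ∑ k ∈ I'.erase i, w' k = ∑ k ∈ I'.erase i, w k :=
              Finset.sum_congr rfl (fun x hx => hupd_ne x (Finset.ne_of_mem_erase hx))
            rw [hsplit, heq, hupd_i] at hI'sum
            omega
          · -- take I = insert j I'
            refine ⟨insert j I', ?_, ?_⟩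
            · intro x hx
              rcases Finset.mem_insert.mp hx with h | h
              · exact h ▸ hjS
              · exact Finset.mem_of_mem_erase (hI'sub h)
            · have heq : ∑ k ∈ I', w' k = ∑ k ∈ I', w k :=
                Finset.sum_congr rfl (fun x hx => hupd_ne x (fun h => hiI' (h ▸ hx)))
              rw [Finset.sum_insert hjI', Finset.card_insert_of_notMem hjI', hj]
              rw [heq] at hI'sum
              omega
      · -- no zero: all values are ≥ 1, hence all equal 1
        push_neg at hzero
        have hall1 : ∀ k ∈ S, w k = 1 := by
          by_contra hcon
          push_neg at hcon
          obtain ⟨k, hkS, hk⟩ := hcon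
          have hk2 : 2 ≤ w k := by
            have := hzero k hkS
            omega
          have h1 : ∑ i ∈ S, w i = w k + ∑ i ∈ S.erase k, w i :=
            (Finset.add_sum_erase _ _ hkS).symm
          have h2 : (S.erase k).card ≤ ∑ i ∈ S.erase k, w i := by
            rw [Finset.card_eq_sum_ones]
            exact Finset.sum_le_sum (fun i hi => by
              have := hzero i (Finset.mem_of_mem_erase hi); omega)
          rw [Finset.card_erase_of_mem hkS, hcard] at h2
          omega
        -- m+1 must be even
        have heven : ¬ Odd (m + 1) := fun h => hodd ⟨h, hall1⟩
        rw [Nat.not_odd_iff_even] at heven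
        obtain ⟨t, ht⟩ := heven
        have hex : ∃ T ⊆ S, T.card = t :=
          Finset.exists_subset_card_eq (by omega)
        obtain ⟨T, hTsub, hTcard⟩ := hex
        refine ⟨T, hTsub, ?_⟩
        have hsumT : ∑ k ∈ T, w k = T.card := by
          rw [Finset.card_eq_sum_ones]
          exact Finset.sum_congr rfl (fun x hx => hall1 x (hTsub hx))
        rw [hsumT, hTcard]
        omega

/-- If `w₁ + ⋯ + wₙ = n`, no `wᵢ` equals `n`, and it is not the case that `n` is odd and
all `wᵢ = 1`, then there is a subset `I` with `∑_{i ∈ I} wᵢ = n − |I|`. -/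
theorem stmt_10 {n : ℕ} (hn : 0 < n) (w : Fin n → ℕ)
    (hsum : ∑ i, w i = n)
    (hwn : ∀ i, w i ≠ n)
    (hodd : ¬ (Odd n ∧ ∀ i, w i = 1)) :
    ∃ I : Finset (Fin n), ∑ i ∈ I, w i = n - I.card := by
  obtain ⟨I, _, hI⟩ := stmt_10_aux n (Finset.univ : Finset (Fin n)) w
    (by simp) hsum (fun i _ => hwn i)
    (fun ⟨h1, h2⟩ => hodd ⟨h1, fun i => h2 i (Finset.mem_univ i)⟩)
  exact ⟨I, hI⟩
end

section
/- Let k be an infinite field and n ≥ 2 an integer. Let Ω = { (i, j) : 1 ≤ i, j ≤ n, i ≠ j }. Then the vectors v(p, λ) ∈ k^Ω with entries v(p, λ)_{(i,j)} = λ_j / (p_i − p_j), taken over all injective functions p : {1, ..., n} → k and all functions λ : {1, ..., n} → k ∖ {0}, span the full vector space k^Ω. Equivalently: for every function m : Ω → k that is not identically zero, there exist an injective p : {1,...,n} → k and λ : {1,...,n} → k ∖ {0} such that ∑_{(i,j) ∈ Ω} m_{ij} · λ_j/(p_i − p_j) ≠ 0. -/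
/-- For an infinite field `k` and `n ≥ 2`, the vectors `(λⱼ/(pᵢ − pⱼ))_{(i,j), i ≠ j}`,
over all injective `p : Fin n → k` and all nowhere-zero `λ : Fin n → k`, span the whole
space of functions on `{(i,j) : i ≠ j}`. -/
theorem stmt_12 {k : Type*} [Field k] [Infinite k] {n : ℕ} (hn : 2 ≤ n) :
    Submodule.span k
        {v : {q : Fin n × Fin n // q.1 ≠ q.2} → k |
          ∃ (p : Fin n → k) (l : Fin n → k), Function.Injective p ∧ (∀ i, l i ≠ 0) ∧
            v = fun q => l q.val.2 / (p q.val.1 - p q.val.2)}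
      = ⊤ := by
  classical
  set S : Set ({q : Fin n × Fin n // q.1 ≠ q.2} → k) :=
    {v | ∃ (p : Fin n → k) (l : Fin n → k), Function.Injective p ∧ (∀ i, l i ≠ 0) ∧
            v = fun q => l q.val.2 / (p q.val.1 - p q.val.2)} with hS
  -- Step 1: for any injective p and arbitrary μ, the vector is in the span
  have key : ∀ (p : Fin n → k), Function.Injective p → ∀ μ : Fin n → k,
      (fun q : {q : Fin n × Fin n // q.1 ≠ q.2} => μ q.val.2 / (p q.val.1 - p q.val.2))
        ∈ Submodule.span k S := by
    intro p hp μ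
    obtain ⟨c, hc⟩ := Infinite.exists_notMem_finset
      ((Finset.univ.image (fun j => -μ j)) ∪ {0})
    have hc0 : c ≠ 0 := by
      intro h; exact hc (by simp [h])
    have hcj : ∀ j, μ j + c ≠ 0 := by
      intro j h
      apply hc
      have : c = -μ j := eq_neg_of_add_eq_zero_right h
      simp [Finset.mem_union, Finset.mem_image]
      subst this; simp
    have h1 : (fun q : {q : Fin n × Fin n // q.1 ≠ q.2} =>
        (μ q.val.2 + c) / (p q.val.1 - p q.val.2)) ∈ Submodule.span k S :=
      Submodule.subset_span ⟨p, fun j => μ j + c, hp, hcj, rfl⟩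
    have h2 : (fun q : {q : Fin n × Fin n // q.1 ≠ q.2} =>
        c / (p q.val.1 - p q.val.2)) ∈ Submodule.span k S :=
      Submodule.subset_span ⟨p, fun _ => c, hp, fun _ => hc0, rfl⟩
    have := Submodule.sub_mem _ h1 h2
    convert this using 1
    funext q
    simp only [Pi.sub_apply]
    rw [div_sub_div_same]
    ring_nf
  -- Step 2: each Pi.single basis vector is in the span
  obtain ⟨f⟩ : Nonempty (ℕ ↪ k) := ⟨Infinite.natEmbedding k⟩
  have single_mem : ∀ q₀ : {q : Fin n × Fin n // q.1 ≠ q.2},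
      Pi.single q₀ (1 : k) ∈ Submodule.span k S := by
    intro q₀
    obtain ⟨⟨i₀, j₀⟩, hq₀⟩ := q₀
    simp only [ne_eq] at hq₀
    set p : Fin n → k := fun i => f i with hpdef
    set p' : Fin n → k := fun i => if i = i₀ then f n else f i with hp'def
    have hpinj : Function.Injective p := fun a b h => Fin.val_injective (f.injective h)
    have hp'inj : Function.Injective p' := by
      intro a b h
      simp only [hp'def] at h
      split_ifs at h with ha hb hb
      · exact ha.trans hb.symm
      · exact absurd (f.injective h).symm (Nat.ne_of_lt b.isLt)
      · exact absurd (f.injective h) (Nat.ne_of_lt a.isLt)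
      · exact Fin.val_injective (f.injective h)
    set μ : Fin n → k := fun j => if j = j₀ then (1 : k) else 0 with hμdef
    have w1 := key p hpinj μ
    have w2 := key p' hp'inj μ
    set d : k := 1 / (f (i₀ : ℕ) - f (j₀ : ℕ)) - 1 / (f n - f (j₀ : ℕ)) with hd
    have hij : f (i₀ : ℕ) - f (j₀ : ℕ) ≠ 0 := by
      intro h
      exact hq₀ (Fin.val_injective (f.injective (sub_eq_zero.mp h)))
    have hnj : f n - f (j₀ : ℕ) ≠ 0 := by
      intro h
      exact Nat.ne_of_lt j₀.isLt (f.injective (sub_eq_zero.mp h)).symm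
    have hni : f n - f (i₀ : ℕ) ≠ 0 := by
      intro h
      exact Nat.ne_of_lt i₀.isLt (f.injective (sub_eq_zero.mp h)).symm
    have hdne : d ≠ 0 := by
      intro h
      rw [hd, sub_eq_zero, one_div, one_div, inv_inj, sub_left_inj] at h
      exact Nat.ne_of_lt i₀.isLt (f.injective h)
    have hdiff := Submodule.smul_mem _ d⁻¹ (Submodule.sub_mem _ w1 w2)
    convert hdiff using 1
    funext q
    obtain ⟨⟨i, j⟩, hq⟩ := q
    simp only [ne_eq] at hq
    simp only [Pi.smul_apply, Pi.sub_apply, smul_eq_mul]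
    by_cases hj : j = j₀
    · subst hj
      by_cases hi : i = i₀
      · subst hi
        have e1 : p' i = f n := by simp [hp'def]
        have e2 : p' j = f (j : ℕ) := by
          simp only [hp'def]
          rw [if_neg (fun h => hq h.symm)]
        rw [Pi.single_eq_same]
        simp only [hμdef, if_pos rfl, e1, e2, hpdef]
        rw [hd]
        field_simp
        rw [div_self (by rw [sub_sub_sub_cancel_right]; exact hni)]
      · have hne : (⟨(i, j), hq⟩ : {q : Fin n × Fin n // q.1 ≠ q.2}) ≠ ⟨(i₀, j), hq₀⟩ := by
          intro h
          exact hi (congrArg (fun z => z.val.1) h)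
        rw [Pi.single_eq_of_ne hne]
        have e1 : p' i = f (i : ℕ) := by
          simp only [hp'def]; rw [if_neg hi]
        have e2 : p' j = f (j : ℕ) := by
          simp only [hp'def]
          rw [if_neg (fun h => hq₀ h.symm)]
        simp [hpdef, e1, e2]
    · have hne : (⟨(i, j), hq⟩ : {q : Fin n × Fin n // q.1 ≠ q.2}) ≠ ⟨(i₀, j₀), hq₀⟩ := by
        intro h
        exact hj (congrArg (fun z => z.val.2) h)
      rw [Pi.single_eq_of_ne hne]
      simp [hμdef, hj]
  -- Conclusion
  rw [Submodule.eq_top_iff']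
  intro x
  have hx : x = ∑ q, Pi.single q (x q) := (Finset.univ_sum_single x).symm
  rw [hx]
  refine Submodule.sum_mem _ (fun q _ => ?_)
  have hsingle : Pi.single q (x q)
      = x q • (Pi.single q (1 : k) : {q : Fin n × Fin n // q.1 ≠ q.2} → k) := by
    funext r
    by_cases hr : r = q
    · subst hr; simp
    · simp [Pi.single_eq_of_ne hr]
  rw [hsingle]
  exact Submodule.smul_mem _ _ (single_mem q)
end

section
/- Let k be a field, r ≥ 1 an integer, and q ∈ k[[u]] a power series with q(0) ≠ 0 (so q is a unit in k[[u]]). Let S = k[[u,v]][ε] with ε² = 0 (the dual numbers over the power series ring k[[u,v]]). Then the u-saturation of the principal ideal (u^r v + q ε), namely the ideal { h ∈ S : u^N h ∈ (u^r v + q ε) for some N ≥ 0 }, equals the ideal (v², u^r v + q ε, v ε). Moreover the quotient ring S/(v², u^r v + q ε, v ε) is isomorphic to k[[u,v]]/(v²). -/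
set_option synthInstance.maxHeartbeats 1000000
set_option maxHeartbeats 2000000

noncomputable section

/-- The ring `k[[u,v]]`, realized as `k[[u]][[v]]`. -/
abbrev Kuv (k : Type*) [CommRing k] : Type _ := PowerSeries (PowerSeries k)

/-- The variable `u` of `k[[u,v]]`. -/
def uVar (k : Type*) [CommRing k] : Kuv k :=
  (PowerSeries.C : PowerSeries k →+* Kuv k) PowerSeries.X

/-- The variable `v` of `k[[u,v]]`. -/
def vVar (k : Type*) [CommRing k] : Kuv k := PowerSeries.X

/-- A power series `q = q(u) ∈ k[[u]]`, viewed inside `k[[u,v]]`. -/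
def ofU {k : Type*} [CommRing k] (q : PowerSeries k) : Kuv k :=
  (PowerSeries.C : PowerSeries k →+* Kuv k) q

/-- The element `uʳv + q·ε` of `S = k[[u,v]][ε]`. -/
def genElt {k : Type*} [CommRing k] (r : ℕ) (q : PowerSeries k) : DualNumber (Kuv k) :=
  algebraMap (Kuv k) (DualNumber (Kuv k)) (uVar k ^ r * vVar k)
    + algebraMap (Kuv k) (DualNumber (Kuv k)) (ofU q) * DualNumber.eps

/-- The ideal `(v², uʳv + q·ε, v·ε)` of `S = k[[u,v]][ε]`. -/
def satIdeal {k : Type*} [CommRing k] (r : ℕ) (q : PowerSeries k) :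
    Ideal (DualNumber (Kuv k)) :=
  Ideal.span {algebraMap (Kuv k) (DualNumber (Kuv k)) (vVar k ^ 2),
    genElt r q,
    algebraMap (Kuv k) (DualNumber (Kuv k)) (vVar k) * DualNumber.eps}

/-- The ideal `(v²)` of `k[[u,v]]`. -/
abbrev Jv (k : Type*) [CommRing k] : Ideal (Kuv k) := Ideal.span {vVar k ^ 2}

/-- `u` is regular modulo `(v²)`. -/
lemma aux_u_reg {k : Type*} [Field k] (N : ℕ) (x : Kuv k)
    (h : uVar k ^ N * x ∈ Jv k) : x ∈ Jv k := by
  rw [Ideal.mem_span_singleton] at h ⊢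
  rw [vVar, PowerSeries.X_pow_dvd_iff] at h ⊢
  intro m hm
  have hx := h m hm
  rw [uVar, ← map_pow, PowerSeries.coeff_C_mul] at hx
  have hX : (PowerSeries.X : PowerSeries k) ^ N ≠ 0 :=
    pow_ne_zero _ PowerSeries.X_ne_zero
  exact (mul_eq_zero.mp hx).resolve_left hX

/-- The ring map `S = k[[u,v]][ε] → k[[u,v]]/(v²)`, `a + bε ↦ a - w uʳ v b`. -/
def auxPhi {k : Type*} [Field k] (r : ℕ) (w : Kuv k) :
    DualNumber (Kuv k) →ₐ[Kuv k] (Kuv k ⧸ Jv k) :=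
  DualNumber.lift ⟨(Algebra.ofId _ _, -(Ideal.Quotient.mk (Jv k) (w * uVar k ^ r * vVar k))),
    by
      show -(Ideal.Quotient.mk (Jv k) (w * uVar k ^ r * vVar k)) *
          -(Ideal.Quotient.mk (Jv k) (w * uVar k ^ r * vVar k)) = 0
      have h0 : Ideal.Quotient.mk (Jv k) ((w * uVar k ^ r * vVar k) * (w * uVar k ^ r * vVar k)) = 0 := by
        rw [Ideal.Quotient.eq_zero_iff_mem]
        exact Ideal.mem_span_singleton.mpr ⟨w * uVar k ^ r * (w * uVar k ^ r), by ring⟩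
      rw [map_mul] at h0
      linear_combination h0,
    fun a => Commute.all _ _⟩

lemma auxPhi_apply {k : Type*} [Field k] (r : ℕ) (w : Kuv k) (x : DualNumber (Kuv k)) :
    auxPhi r w x =
      Ideal.Quotient.mk (Jv k) (x.fst - x.snd * (w * uVar k ^ r * vVar k)) := by
  rw [auxPhi, DualNumber.lift_apply_apply]
  simp only [Algebra.ofId_apply, Ideal.Quotient.algebraMap_eq]
  simp only [map_sub, map_mul]
  ring

/-- In `S = k[[u,v]][ε]` (dual numbers over `k[[u,v]]`), for `r ≥ 1` and `q ∈ k[[u]]` with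
`q(0) ≠ 0`, the `u`-saturation of the principal ideal `(uʳv + q·ε)` equals the ideal
`(v², uʳv + q·ε, v·ε)`; moreover `S/(v², uʳv + q·ε, v·ε) ≅ k[[u,v]]/(v²)`. -/
theorem stmt_14 {k : Type*} [Field k] (r : ℕ) (hr : 1 ≤ r)
    (q : PowerSeries k) (hq : PowerSeries.constantCoeff q ≠ 0) :
    (∀ h : DualNumber (Kuv k),
      (∃ N : ℕ,
          algebraMap (Kuv k) (DualNumber (Kuv k)) (uVar k) ^ N * h ∈
            Ideal.span {genElt r q})
        ↔ h ∈ satIdeal r q) ∧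
    Nonempty ((DualNumber (Kuv k) ⧸ satIdeal r q) ≃+* (Kuv k ⧸ Ideal.span {vVar k ^ 2})) := by
  classical
  have hQ : IsUnit (ofU q) := by
    have h1 : IsUnit q :=
      PowerSeries.isUnit_iff_constantCoeff.mpr (isUnit_iff_ne_zero.mpr hq)
    exact h1.map (PowerSeries.C : PowerSeries k →+* Kuv k)
  obtain ⟨w, hw⟩ := hQ.exists_right_inv
  have hε : (DualNumber.eps : DualNumber (Kuv k)) * DualNumber.eps = 0 := DualNumber.eps_mul_eps
  -- generators of satIdeal are in the kernel of φ, and conversely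
  have hker : ∀ x : DualNumber (Kuv k), x ∈ satIdeal r q ↔ (auxPhi r w) x = 0 := by
    intro x
    constructor
    · intro hx
      have hle : satIdeal r q ≤ RingHom.ker (auxPhi (k:=k) r w).toRingHom := by
        rw [satIdeal, Ideal.span_le]
        intro g hg
        simp only [Set.mem_insert_iff, Set.mem_singleton_iff] at hg
        rw [SetLike.mem_coe, RingHom.mem_ker]
        rcases hg with rfl | rfl | rfl
        · show (auxPhi r w) _ = 0
          rw [auxPhi_apply, Ideal.Quotient.eq_zero_iff_mem]
          simp only [TrivSqZeroExt.algebraMap_eq_inl, TrivSqZeroExt.fst_inl,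
            TrivSqZeroExt.snd_inl, zero_mul, sub_zero]
          exact Ideal.subset_span rfl
        · show (auxPhi r w) _ = 0
          rw [auxPhi_apply, Ideal.Quotient.eq_zero_iff_mem]
          have h1 : (genElt r q : DualNumber (Kuv k)).fst = uVar k ^ r * vVar k := by
            simp [genElt, TrivSqZeroExt.algebraMap_eq_inl, TrivSqZeroExt.fst_add,
              TrivSqZeroExt.fst_inl, TrivSqZeroExt.fst_mul, DualNumber.fst_eps]
          have h2 : (genElt r q : DualNumber (Kuv k)).snd = ofU q := by
            simp [genElt, TrivSqZeroExt.algebraMap_eq_inl, TrivSqZeroExt.snd_add,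
              TrivSqZeroExt.snd_inl, DualNumber.snd_mul, TrivSqZeroExt.fst_inl,
              DualNumber.snd_eps, DualNumber.fst_eps]
          rw [h1, h2]
          have : uVar k ^ r * vVar k - ofU q * (w * uVar k ^ r * vVar k) = 0 := by
            linear_combination (-(uVar k ^ r * vVar k)) * hw
          rw [this]
          exact (Jv k).zero_mem
        · show (auxPhi r w) _ = 0
          rw [auxPhi_apply, Ideal.Quotient.eq_zero_iff_mem]
          have h1 : ((algebraMap (Kuv k) (DualNumber (Kuv k)) (vVar k)) * DualNumber.eps).fst = 0 := by
            simp [TrivSqZeroExt.algebraMap_eq_inl, TrivSqZeroExt.fst_mul,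
              TrivSqZeroExt.fst_inl, DualNumber.fst_eps]
          have h2 : ((algebraMap (Kuv k) (DualNumber (Kuv k)) (vVar k)) * DualNumber.eps).snd = vVar k := by
            simp [TrivSqZeroExt.algebraMap_eq_inl, DualNumber.snd_mul,
              TrivSqZeroExt.fst_inl, TrivSqZeroExt.snd_inl, DualNumber.snd_eps,
              DualNumber.fst_eps]
          rw [h1, h2]
          exact Ideal.mem_span_singleton.mpr ⟨-(w * uVar k ^ r), by ring⟩
      have := hle hx
      rwa [RingHom.mem_ker] at this
    · intro hx
      rw [auxPhi_apply, Ideal.Quotient.eq_zero_iff_mem] at hx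
      obtain ⟨t, ht⟩ := Ideal.mem_span_singleton.mp hx
      have hxeq : x = algebraMap (Kuv k) (DualNumber (Kuv k)) t * algebraMap (Kuv k) (DualNumber (Kuv k)) (vVar k ^ 2) + algebraMap (Kuv k) (DualNumber (Kuv k)) (w * x.snd) * genElt r q := by
        apply TrivSqZeroExt.ext
        · simp only [genElt, TrivSqZeroExt.algebraMap_eq_inl, TrivSqZeroExt.fst_add,
            TrivSqZeroExt.fst_mul, TrivSqZeroExt.fst_inl, DualNumber.fst_eps, mul_zero,
            add_zero]
          linear_combination ht
        · simp only [genElt, TrivSqZeroExt.algebraMap_eq_inl, TrivSqZeroExt.snd_add,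
            DualNumber.snd_mul, TrivSqZeroExt.fst_inl, TrivSqZeroExt.snd_inl,
            DualNumber.snd_eps, DualNumber.fst_eps, TrivSqZeroExt.fst_add,
            TrivSqZeroExt.fst_mul, mul_zero, zero_mul, add_zero, zero_add, mul_one, mul_zero]
          linear_combination (-(TrivSqZeroExt.snd x)) * hw
      rw [satIdeal, hxeq]
      exact add_mem
        (Ideal.mul_mem_left _ _ (Ideal.subset_span (Set.mem_insert _ _)))
        (Ideal.mul_mem_left _ _
          (Ideal.subset_span (Set.mem_insert_of_mem _ (Set.mem_insert _ _))))
  constructor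
  · intro h
    constructor
    · rintro ⟨N, hN⟩
      have hgen : genElt r q ∈ satIdeal r q :=
        Ideal.subset_span (Set.mem_insert_of_mem _ (Set.mem_insert _ _))
      have hle : Ideal.span {genElt r q} ≤ satIdeal r q := by
        rw [Ideal.span_le]; exact Set.singleton_subset_iff.mpr hgen
      have h3 : (auxPhi r w) (algebraMap (Kuv k) (DualNumber (Kuv k)) (uVar k) ^ N * h) = 0 := (hker _).mp (hle hN)
      rw [map_mul, map_pow, auxPhi_apply, auxPhi_apply] at h3
      simp only [TrivSqZeroExt.algebraMap_eq_inl, TrivSqZeroExt.fst_inl,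
        TrivSqZeroExt.snd_inl, zero_mul, sub_zero] at h3
      rw [← map_pow, ← map_mul, Ideal.Quotient.eq_zero_iff_mem] at h3
      have h4 := aux_u_reg N _ h3
      refine (hker h).mpr ?_
      rw [auxPhi_apply, Ideal.Quotient.eq_zero_iff_mem]
      exact h4
    · intro hmem
      -- the transporter {x | ∃ N, uᴺ x ∈ (genElt)} is an ideal containing the generators
      let T : Ideal (DualNumber (Kuv k)) :=
        { carrier := {x | ∃ N : ℕ, algebraMap (Kuv k) (DualNumber (Kuv k)) (uVar k) ^ N * x ∈ Ideal.span {genElt r q}},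
          zero_mem' := ⟨0, by simp⟩
          add_mem' := by
            rintro a b ⟨Na, ha⟩ ⟨Nb, hb⟩
            refine ⟨Na + Nb, ?_⟩
            rw [mul_add]
            refine add_mem ?_ ?_
            · have : algebraMap (Kuv k) (DualNumber (Kuv k)) (uVar k) ^ (Na + Nb) * a = algebraMap (Kuv k) (DualNumber (Kuv k)) (uVar k) ^ Nb * (algebraMap (Kuv k) (DualNumber (Kuv k)) (uVar k) ^ Na * a) := by
                ring
              rw [this]; exact Ideal.mul_mem_left _ _ ha
            · have : algebraMap (Kuv k) (DualNumber (Kuv k)) (uVar k) ^ (Na + Nb) * b = algebraMap (Kuv k) (DualNumber (Kuv k)) (uVar k) ^ Na * (algebraMap (Kuv k) (DualNumber (Kuv k)) (uVar k) ^ Nb * b) := by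
                ring
              rw [this]; exact Ideal.mul_mem_left _ _ hb
          smul_mem' := by
            rintro c x ⟨N, hN⟩
            refine ⟨N, ?_⟩
            rw [smul_eq_mul]
            have : algebraMap (Kuv k) (DualNumber (Kuv k)) (uVar k) ^ N * (c * x) = c * (algebraMap (Kuv k) (DualNumber (Kuv k)) (uVar k) ^ N * x) := by ring
            rw [this]; exact Ideal.mul_mem_left _ _ hN }
      have hle : satIdeal r q ≤ T := by
        rw [satIdeal, Ideal.span_le]
        intro g hg
        simp only [Set.mem_insert_iff, Set.mem_singleton_iff] at hg
        rcases hg with rfl | rfl | rfl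
        · refine ⟨2 * r, ?_⟩
          rw [Ideal.mem_span_singleton']
          refine ⟨algebraMap (Kuv k) (DualNumber (Kuv k)) (uVar k ^ r * vVar k) - algebraMap (Kuv k) (DualNumber (Kuv k)) (ofU q) * DualNumber.eps, ?_⟩
          simp only [genElt, map_mul, map_pow]
          linear_combination
            (-(algebraMap (Kuv k) (DualNumber (Kuv k)) (ofU q) * algebraMap (Kuv k) (DualNumber (Kuv k)) (ofU q))) * hε
        · refine ⟨0, ?_⟩
          rw [pow_zero, one_mul]
          exact Ideal.subset_span rfl
        · refine ⟨r, ?_⟩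
          rw [Ideal.mem_span_singleton']
          refine ⟨DualNumber.eps, ?_⟩
          simp only [genElt, map_mul, map_pow]
          linear_combination (algebraMap (Kuv k) (DualNumber (Kuv k)) (ofU q)) * hε
      exact hle hmem
  · -- the isomorphism
    have hkerEq : RingHom.ker (auxPhi (k:=k) r w).toRingHom = satIdeal r q := by
      ext x
      rw [RingHom.mem_ker]
      exact (hker x).symm
    have hsurj : Function.Surjective (auxPhi (k:=k) r w).toRingHom := by
      intro y
      obtain ⟨a, rfl⟩ := Ideal.Quotient.mk_surjective y
      refine ⟨algebraMap (Kuv k) (DualNumber (Kuv k)) a, ?_⟩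
      show (auxPhi r w) (algebraMap (Kuv k) (DualNumber (Kuv k)) a) = _
      rw [auxPhi_apply]
      simp only [TrivSqZeroExt.algebraMap_eq_inl, TrivSqZeroExt.fst_inl,
        TrivSqZeroExt.snd_inl, zero_mul, sub_zero]
    exact ⟨(Ideal.quotEquivOfEq hkerEq.symm).trans
      (RingHom.quotientKerEquivOfSurjective hsurj)⟩
end
end

section
/- Let k be an infinite field, R a commutative k-algebra, r_1, ..., r_n ∈ R, and m a positive integer. Let I = (r_1, ..., r_n) be the ideal they generate. Then the m-th bracket power I^{[m]} (the ideal generated by { r^m : r ∈ I }) equals the ideal generated by the m-th powers of k-linear combinations of the generators, { (c_1 r_1 + ⋯ + c_n r_n)^m : c_1, ..., c_n ∈ k }. -/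
open Finset

/-- Core vector-space fact: over an infinite field, the indicator-like vector
`α ↦ if α = β then multinomial β else 0` lies in the span of the vectors
`α ↦ multinomial α * c^α`. -/
lemma aux_span {k : Type*} [Field k] [Infinite k] {n m : ℕ}
    (β : Fin n → ℕ) (hβ : β ∈ Finset.piAntidiag Finset.univ m) :
    (fun α : (Finset.piAntidiag (Finset.univ : Finset (Fin n)) m : Finset _) =>
        if (α : Fin n → ℕ) = β then (Nat.multinomial Finset.univ β : k) else 0)
      ∈ Submodule.span k (Set.range fun c : Fin n → k =>
          fun α : (Finset.piAntidiag (Finset.univ : Finset (Fin n)) m : Finset _) =>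
            (Nat.multinomial Finset.univ (α : Fin n → ℕ) : k) *
              ∏ i, c i ^ (α : Fin n → ℕ) i) := by
  set A := Finset.piAntidiag (Finset.univ : Finset (Fin n)) m with hA
  rw [← Subspace.forall_mem_dualAnnihilator_apply_eq_zero_iff]
  intro φ hφ
  rw [Submodule.mem_dualAnnihilator] at hφ
  set lam : A → k := fun α => φ (fun α' => if α = α' then 1 else 0) with hlam
  -- φ applied to any vector is a sum against lam
  have hφsum : ∀ f : A → k, φ f = ∑ α : A, f α * lam α := by
    intro f
    rw [LinearMap.pi_apply_eq_sum_univ φ f]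
    simp [lam, smul_eq_mul]
  -- the polynomial encoding the functional composed with the power map
  set q : MvPolynomial (Fin n) k :=
      ∑ α : A, MvPolynomial.monomial (Finsupp.equivFunOnFinite.symm (α : Fin n → ℕ))
        ((Nat.multinomial Finset.univ (α : Fin n → ℕ) : k) * lam α) with hq
  have heval : ∀ c : Fin n → k, MvPolynomial.eval c q = 0 := by
    intro c
    have h0 : φ (fun α : A => (Nat.multinomial Finset.univ (α : Fin n → ℕ) : k) *
        ∏ i, c i ^ (α : Fin n → ℕ) i) = 0 := hφ _ (Submodule.subset_span ⟨c, rfl⟩)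
    rw [hφsum] at h0
    rw [hq, map_sum, ← h0]
    refine Finset.sum_congr rfl fun α _ => ?_
    rw [MvPolynomial.eval_monomial]
    rw [Finsupp.prod_fintype _ _ (fun i => pow_zero (c i))]
    simp only [Finsupp.coe_equivFunOnFinite_symm]
    ring
  have hq0 : q = 0 := by
    apply MvPolynomial.funext
    intro x
    rw [heval x, map_zero]
  -- extract the coefficient at β
  have hcoeff : (Nat.multinomial Finset.univ β : k) * lam ⟨β, hβ⟩ = 0 := by
    have := congrArg (MvPolynomial.coeff (Finsupp.equivFunOnFinite.symm β)) hq0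
    rw [hq] at this
    simp only [MvPolynomial.coeff_sum, MvPolynomial.coeff_monomial, MvPolynomial.coeff_zero] at this
    rw [Finset.sum_eq_single (⟨β, hβ⟩ : A)] at this
    · simpa using this
    · intro α _ hne
      rw [if_neg]
      intro h
      exact hne (Subtype.ext (Finsupp.equivFunOnFinite.symm.injective h))
    · simp
  rw [hφsum]
  rw [Finset.sum_eq_single (⟨β, hβ⟩ : A)]
  · simpa using hcoeff
  · intro α _ hne
    rw [if_neg, zero_mul]
    intro h
    exact hne (Subtype.ext h)
  · simp

/-- Each "multinomial times monomial in the `r i`" lies in the span of the `m`-th powers of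
`k`-linear combinations of the `r i`. -/
lemma aux_mem {k : Type*} [Field k] [Infinite k]
    {R : Type*} [CommRing R] [Algebra k R]
    {n : ℕ} (r : Fin n → R) {m : ℕ}
    (β : Fin n → ℕ) (hβ : β ∈ Finset.piAntidiag Finset.univ m) :
    (Nat.multinomial Finset.univ β : R) * ∏ i, r i ^ β i
      ∈ Ideal.span {x : R | ∃ c : Fin n → k, x = (∑ i, c i • r i) ^ m} := by
  set A := Finset.piAntidiag (Finset.univ : Finset (Fin n)) m with hA
  set J := Ideal.span {x : R | ∃ c : Fin n → k, x = (∑ i, c i • r i) ^ m} with hJ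
  -- the linear "substitution" map
  set L : ({x // x ∈ A} → k) →ₗ[k] R :=
    { toFun := fun f => ∑ α : A, f α • ∏ i, r i ^ (α : Fin n → ℕ) i
      map_add' := by intro f g; simp [add_smul, Finset.sum_add_distrib]
      map_smul' := by intro c f; simp [smul_smul, Finset.smul_sum] } with hL
  have key := aux_span (k := k) β hβ
  have hmem : L (fun α : A =>
      if (α : Fin n → ℕ) = β then (Nat.multinomial Finset.univ β : k) else 0)
      ∈ Submodule.map L (Submodule.span k (Set.range fun c : Fin n → k =>
          fun α : A => (Nat.multinomial Finset.univ (α : Fin n → ℕ) : k) *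
            ∏ i, c i ^ (α : Fin n → ℕ) i)) :=
    Submodule.mem_map_of_mem key
  rw [Submodule.map_span] at hmem
  -- identify the image of the target vector
  have hv : L (fun α : A =>
      if (α : Fin n → ℕ) = β then (Nat.multinomial Finset.univ β : k) else 0)
      = (Nat.multinomial Finset.univ β : R) * ∏ i, r i ^ β i := by
    rw [hL]
    show (∑ α : A, _ • ∏ i, r i ^ (α : Fin n → ℕ) i) = _
    rw [Finset.sum_eq_single (⟨β, hβ⟩ : A)]
    · simp [Algebra.smul_def]
    · intro α _ hne
      rw [if_neg, zero_smul]
      intro h; exact hne (Subtype.ext h)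
    · simp
  rw [hv] at hmem
  -- the span the image lands in is contained in J
  have hle : Submodule.span k (⇑L '' Set.range fun c : Fin n → k =>
      fun α : A => (Nat.multinomial Finset.univ (α : Fin n → ℕ) : k) *
        ∏ i, c i ^ (α : Fin n → ℕ) i) ≤ J.restrictScalars k := by
    rw [Submodule.span_le]
    rintro x ⟨-, ⟨c, rfl⟩, rfl⟩
    have hLw : L (fun α : A => (Nat.multinomial Finset.univ (α : Fin n → ℕ) : k) *
        ∏ i, c i ^ (α : Fin n → ℕ) i) = (∑ i, c i • r i) ^ m := by
      rw [hL]
      show (∑ α : A, _ • ∏ i, r i ^ (α : Fin n → ℕ) i) = _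
      rw [Finset.sum_pow_eq_sum_piAntidiag, ← hA, ← Finset.sum_attach A]
      refine Finset.sum_congr rfl fun α _ => ?_
      simp [Algebra.smul_def, mul_pow, map_pow, Finset.prod_mul_distrib, map_prod]
      ring
    show L _ ∈ J
    rw [hLw]
    exact Ideal.subset_span ⟨c, rfl⟩
  exact hle hmem

/-- Over an infinite field `k`, the `m`-th bracket power of the ideal `(r₁, ..., rₙ)` of a
commutative `k`-algebra `R` is generated by the `m`-th powers of the `k`-linear combinations
of the generators. -/
theorem stmt_16 {k : Type*} [Field k] [Infinite k]
    {R : Type*} [CommRing R] [Algebra k R]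
    {n : ℕ} (r : Fin n → R) {m : ℕ} (hm : 0 < m) :
    Ideal.span {x : R | ∃ t ∈ Ideal.span (Set.range r), x = t ^ m}
      = Ideal.span {x : R | ∃ c : Fin n → k, x = (∑ i, c i • r i) ^ m} := by
  refine le_antisymm ?_ ?_
  · rw [Ideal.span_le]
    rintro x ⟨t, ht, rfl⟩
    obtain ⟨a, rfl⟩ := (Submodule.mem_span_range_iff_exists_fun R).mp ht
    rw [Finset.sum_congr rfl (fun i _ => smul_eq_mul (a := a i) (b := r i)),
      Finset.sum_pow_eq_sum_piAntidiag]
    refine Ideal.sum_mem _ fun α hα => ?_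
    have : (Nat.multinomial Finset.univ α : R) * ∏ i, (a i * r i) ^ α i
        = (∏ i, a i ^ α i) * ((Nat.multinomial Finset.univ α : R) * ∏ i, r i ^ α i) := by
      simp [mul_pow, Finset.prod_mul_distrib]; ring
    rw [this]
    exact Ideal.mul_mem_left _ _ (aux_mem (k := k) r α hα)
  · rw [Ideal.span_le]
    rintro x ⟨c, rfl⟩
    refine Ideal.subset_span ⟨∑ i, c i • r i, ?_, rfl⟩
    exact Submodule.sum_mem _ fun i _ =>
      Submodule.smul_of_tower_mem _ _ (Submodule.subset_span ⟨i, rfl⟩)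
end
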